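/- arXiv:2308.01114 — 9 statements merged into one kernel-verified Lean document; each statement's English description precedes it below -/
import Mathlib

section
/- Theorem 4.2 (holomorphic functions on G invariant under the cyclic hyperbolic group): Fix a real number c > 1. Let F : ℂ × ℂ → ℂ define a holomorphic function on G. Then F(c·z, c·w) = F(z, w) holds for all z, w ∈ ℂ with z ≠ w if and only if there exists an entire function g : ℂ → ℂ such that F(z, w) = g(w/(z − w)) for all z, w ∈ ℂ with z ≠ w. -/
/-- `F : ℂ × ℂ → ℂ` defines a holomorphic function on
`G = Ĉ² \ diagonal`, expressed in the standard affine charts. -/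
def DefinesHolomorphicOnG (F : ℂ × ℂ → ℂ) : Prop :=
  DifferentiableOn ℂ F {p : ℂ × ℂ | p.1 ≠ p.2} ∧
  (∃ F₂ : ℂ × ℂ → ℂ, DifferentiableOn ℂ F₂ {p : ℂ × ℂ | p.1 * p.2 ≠ 1} ∧
    ∀ z v : ℂ, v ≠ 0 → z * v ≠ 1 → F₂ (z, v) = F (z, 1 / v)) ∧
  (∃ F₃ : ℂ × ℂ → ℂ, DifferentiableOn ℂ F₃ {p : ℂ × ℂ | p.1 * p.2 ≠ 1} ∧
    ∀ u w : ℂ, u ≠ 0 → u * w ≠ 1 → F₃ (u, w) = F (1 / u, w))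

/-! Restricted to a punctured line `t ↦ (t z, t w)` through a point off the diagonal, a
`c`-invariant `F` becomes a holomorphic function on `ℂˣ` invariant under `t ↦ c t`. It takes all
its values on the compact annulus `1 ≤ ‖t‖ ≤ c`, so it is bounded; by the removable singularity
theorem and Liouville's theorem it is constant. Hence `F` is invariant under every complex
dilation, and `F (z, w) = F (1 + t, t)` for `t = w / (z - w)`. -/

open Set Metric Filter Topology

theorem apply_zpow_mul_eq_of_apply_mul_eq {G α : Type*} [GroupWithZero G] {h : G → α} {c : G}
    (hc : c ≠ 0) (hinv : ∀ t, h (c * t) = h t) (n : ℤ) (t : G) : h (c ^ n * t) = h t := by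
  induction n using Int.induction_on generalizing t with
  | zero => simp
  | succ n ih => rw [zpow_add_one₀ hc, mul_assoc, ih, hinv]
  | pred n ih => rw [zpow_sub_one₀ hc, mul_assoc, ih, ← hinv, mul_inv_cancel_left₀ hc]

theorem exists_mem_annulus_apply_eq {𝕜 α : Type*} [NormedDivisionRing 𝕜] {h : 𝕜 → α} {c : 𝕜}
    (hc : 1 < ‖c‖) (hinv : ∀ t, h (c * t) = h t) {t : 𝕜} (ht : t ≠ 0) :
    ∃ s ∈ closedBall (0 : 𝕜) ‖c‖ \ ball 0 1, h s = h t := by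
  obtain ⟨n, hn_le, hn_lt⟩ := exists_mem_Ico_zpow (norm_pos_iff.2 ht) hc
  have hpos : 0 < ‖c‖ ^ n := zpow_pos (one_pos.trans hc) n
  refine ⟨c ^ (-n) * t, ⟨?_, ?_⟩,
    apply_zpow_mul_eq_of_apply_mul_eq (norm_pos_iff.1 (one_pos.trans hc)) hinv _ _⟩
  · rw [mem_closedBall_zero_iff, norm_mul, norm_zpow, zpow_neg, inv_mul_le_iff₀ hpos,
      ← zpow_add_one₀ (one_pos.trans hc).ne']
    exact hn_lt.le
  · rw [mem_ball_zero_iff, not_lt, norm_mul, norm_zpow, zpow_neg, le_inv_mul_iff₀ hpos, mul_one]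
    exact hn_le

theorem Complex.apply_eq_apply_of_differentiableOn_compl_singleton_of_isBounded
    {E : Type*} [NormedAddCommGroup E] [NormedSpace ℂ E] [CompleteSpace E] {h : ℂ → E} {a : ℂ}
    (hd : DifferentiableOn ℂ h {a}ᶜ) (hb : Bornology.IsBounded (h '' {a}ᶜ)) {s t : ℂ}
    (hs : s ≠ a) (ht : t ≠ a) : h s = h t := by
  set H := Function.update h a (limUnder (𝓝[≠] a) h)
  have hH : Differentiable ℂ H := by
    rw [← differentiableOn_univ]
    obtain ⟨C, hC⟩ := hb.exists_norm_le
    refine Complex.differentiableOn_update_limUnder_of_bddAbove univ_mem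
      (by rwa [← compl_eq_univ_sdiff]) ⟨C, ?_⟩
    rintro _ ⟨x, hx, rfl⟩
    exact hC _ (mem_image_of_mem h (by rwa [compl_eq_univ_sdiff]))
  have hrange : Bornology.IsBounded (range H) := by
    refine (hb.insert (H a)).subset ?_
    rintro _ ⟨x, rfl⟩
    rcases eq_or_ne x a with rfl | hx
    · exact mem_insert _ _
    · exact mem_insert_of_mem _ ⟨x, hx, (Function.update_of_ne hx _ _).symm⟩
  simpa [H, hs, ht] using hH.apply_eq_apply_of_bounded hrange s t

theorem Complex.apply_eq_apply_of_apply_mul_eq {E : Type*} [NormedAddCommGroup E]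
    [NormedSpace ℂ E] [CompleteSpace E] {h : ℂ → E} {c : ℂ} (hc : 1 < ‖c‖)
    (hd : DifferentiableOn ℂ h {0}ᶜ) (hinv : ∀ t, h (c * t) = h t) {s t : ℂ}
    (hs : s ≠ 0) (ht : t ≠ 0) : h s = h t := by
  set A := closedBall (0 : ℂ) ‖c‖ \ ball 0 1
  have hA : A ⊆ {0}ᶜ := fun u hu (hu0 : u = 0) => hu.2 (by simp [hu0])
  have hK : IsCompact (h '' A) :=
    ((isCompact_closedBall 0 _).diff isOpen_ball).image_of_continuousOn (hd.continuousOn.mono hA)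
  refine apply_eq_apply_of_differentiableOn_compl_singleton_of_isBounded hd
    (hK.isBounded.subset ?_) hs ht
  rintro _ ⟨u, hu, rfl⟩
  exact exists_mem_annulus_apply_eq hc hinv hu

theorem apply_mul_mul_eq_of_apply_mul_mul_eq {E : Type*} [NormedAddCommGroup E]
    [NormedSpace ℂ E] [CompleteSpace E] {F : ℂ × ℂ → E} {c : ℂ} (hc : 1 < ‖c‖)
    (hd : DifferentiableOn ℂ F {p | p.1 ≠ p.2})
    (hinv : ∀ z w, z ≠ w → F (c * z, c * w) = F (z, w)) {z w l : ℂ} (hzw : z ≠ w) (hl : l ≠ 0) :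
    F (l * z, l * w) = F (z, w) := by
  have hmaps : MapsTo (fun t : ℂ => (t * z, t * w)) {0}ᶜ {p | p.1 ≠ p.2} :=
    fun t ht e => hzw (mul_left_cancel₀ ht e)
  have key := Complex.apply_eq_apply_of_apply_mul_eq (h := fun t => F (t * z, t * w)) hc
    (hd.comp (by fun_prop) hmaps) ?_ hl one_ne_zero
  · simpa using key
  intro t
  rcases eq_or_ne t 0 with rfl | ht
  · simp
  · simpa only [mul_assoc] using hinv _ _ (hmaps ht)

/-- Theorem 4.2: a holomorphic function on `G` is invariant under
`(z,w) ↦ (cz, cw)` (with `c > 1` real) iff it has the form `g (w / (z - w))`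
for some entire function `g`. -/
theorem invariant_hyperbolic_iff (c : ℝ) (hc : 1 < c)
    (F : ℂ × ℂ → ℂ) (hF : DefinesHolomorphicOnG F) :
    (∀ z w : ℂ, z ≠ w → F ((c : ℂ) * z, (c : ℂ) * w) = F (z, w)) ↔
    (∃ g : ℂ → ℂ, Differentiable ℂ g ∧
      ∀ z w : ℂ, z ≠ w → F (z, w) = g (w / (z - w))) := by
  have hc0 : (c : ℂ) ≠ 0 := Complex.ofReal_ne_zero.2 (one_pos.trans hc).ne'
  constructor
  · intro hinv
    refine ⟨fun t => F (1 + t, t),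
      differentiableOn_univ.1 (hF.1.comp (by fun_prop) fun t _ => by simp), fun z w hzw => ?_⟩
    dsimp only
    have hzw' : z - w ≠ 0 := sub_ne_zero.2 hzw
    have hcnorm : 1 < ‖(c : ℂ)‖ := by rwa [Complex.norm_real, Real.norm_of_nonneg (by linarith)]
    have key := apply_mul_mul_eq_of_apply_mul_mul_eq hcnorm hF.1 hinv
      (z := 1 + w / (z - w)) (w := w / (z - w)) (by simp) hzw'
    rw [← key, mul_one_add, mul_div_cancel₀ _ hzw', sub_add_cancel]
  · rintro ⟨g, -, hg⟩ z w hzw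
    rw [hg _ _ ((mul_right_injective₀ hc0).ne hzw), hg _ _ hzw, ← mul_sub,
      mul_div_mul_left _ _ hc0]
end

section
/- Core of Theorem 4.1 (rigidity for non-elementary Fuchsian groups): Let F : ℂ × ℂ → ℂ be holomorphic on the open set {(z,w) ∈ ℂ × ℂ : z ≠ w}. Let P ⊆ ℝ be a set such that for every p ∈ P there exist real numbers a, b, c, d with a·d − b·c = 1, |a + d| > 2, c ≠ 0, c·p + d ≠ 0 and (a·p + b)/(c·p + d) = p, and such that F is invariant under the associated Möbius transformation, meaning: for all z, w ∈ ℂ with z ≠ w, c·z + d ≠ 0 and c·w + d ≠ 0 one has F((a·z + b)/(c·z + d), (a·w + b)/(c·w + d)) = F(z, w). Suppose Λ ⊆ ℝ is nonempty, Λ is contained in the closure of P (closure taken in ℂ), and Λ has no isolated points, i.e. every x ∈ Λ lies in the closure of Λ \ {x}. Then F is constant on {(z,w) ∈ ℂ × ℂ : z ≠ w}. -/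
/-!
Fix `p ∈ P` and a hyperbolic `γ` fixing `p`. Its second fixed point `q` is real, and the
multipliers `(c p + d)⁻²`, `(c q + d)⁻²` of `γ` at `p` and `q` are reciprocal and different, so
`|c q + d| ≠ 1`. Near `q` the holomorphic function `f = F(·, p)` satisfies `f ∘ γ = f`; if `f`
were not locally constant, comparing the leading terms `(z - q)ⁿ` on both sides would make the
multiplier at `q` an `n`-th root of unity. Hence `F(·, p)` is constant on `ℂ \ {p}`, for every
`p ∈ P`. For fixed `z₁ ≠ z₂`, the function `w ↦ F(z₁, w) - F(z₂, w)` therefore vanishes on `P`,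
which accumulates at every point of the nonempty perfect set `Λ`, hence at infinitely many points;
by the identity theorem it vanishes identically.
The same argument applied to `F ∘ swap` makes `F` constant in each variable separately.
-/

open Set Filter Topology

theorem mobius_sub_mobius {K : Type*} [Field K] (a b c d z w : K)
    (hz : c * z + d ≠ 0) (hw : c * w + d ≠ 0) :
    (a * z + b) / (c * z + d) - (a * w + b) / (c * w + d)
      = (a * d - b * c) * (z - w) / ((c * z + d) * (c * w + d)) := by
  rw [div_sub_div _ _ hz hw]
  ring

theorem exists_fixedPoint_ne_of_two_lt_abs_trace {a b c d p : ℝ} (hdet : a * d - b * c = 1)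
    (htr : 2 < |a + d|) (hc : c ≠ 0) (hp : c * p + d ≠ 0)
    (hfix : (a * p + b) / (c * p + d) = p) :
    ∃ q : ℝ, q ≠ p ∧ c * q + d ≠ 0 ∧ (a * q + b) / (c * q + d) = q ∧ |c * q + d| ≠ 1 := by
  have hquad : c * p ^ 2 + (d - a) * p - b = 0 := by
    linear_combination -(div_eq_iff hp).mp hfix
  obtain ⟨q, hcq⟩ : ∃ q, c * q + d = a - c * p := ⟨(a - d) / c - p, by field_simp; ring⟩
  have hprod : (c * p + d) * (c * q + d) = 1 := by rw [hcq]; linear_combination hdet - c * hquad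
  have hsum : (c * p + d) + (c * q + d) = a + d := by rw [hcq]; ring
  -- the two multipliers are the roots of `X² - (a + d) X + 1`, distinct because `|a + d| > 2`
  have hne : c * p + d ≠ c * q + d := by
    intro h
    rw [h] at hprod hsum
    have : |a + d| ^ 2 = 2 ^ 2 := by
      rw [sq_abs]
      linear_combination (-(2 * (c * q + d) + a + d)) * hsum + 4 * hprod
    nlinarith [abs_nonneg (a + d)]
  have hq : c * q + d ≠ 0 := right_ne_zero_of_mul_eq_one hprod
  refine ⟨q, fun h => hne (by rw [h]), hq, ?_, fun h => hne ?_⟩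
  · rw [div_eq_iff hq]
    linear_combination (p - q) * hcq - hquad
  · have hsq : (c * q + d) * (c * q + d) = 1 := by
      rcases abs_eq (zero_le_one' ℝ) |>.mp h with h | h <;> rw [h] <;> norm_num
    exact mul_right_cancel₀ hq (hprod.trans hsq.symm)

theorem AnalyticAt.eventually_eq_of_comp_eq {𝕜 E : Type*} [NontriviallyNormedField 𝕜]
    [NormedAddCommGroup E] [NormedSpace 𝕜 E] {f : 𝕜 → E} {m h : 𝕜 → 𝕜} {q : 𝕜}
    (hf : AnalyticAt 𝕜 f q) (hh : ContinuousAt h q) (hq : ¬IsOfFinOrder (h q))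
    (hm : ∀ᶠ z in 𝓝 q, m z - q = (z - q) * h z) (hfm : ∀ᶠ z in 𝓝 q, f (m z) = f z) :
    ∀ᶠ z in 𝓝 q, f z = f q := by
  by_contra hne
  obtain ⟨n, g, hg, hgq, hfg⟩ :=
    (hf.sub (analyticAt_const (v := f q))).exists_eventuallyEq_pow_smul_nonzero_iff.2
      (by simpa only [Pi.sub_apply, sub_eq_zero] using hne)
  have hn : n ≠ 0 := by
    rintro rfl
    exact hgq (by simpa using hfg.self_of_nhds.symm)
  have hmq : Tendsto m (𝓝 q) (𝓝 q) := by
    have : ContinuousAt (fun z => q + (z - q) * h z) q := by fun_prop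
    refine (this.tendsto.congr' ?_).trans (by simp)
    filter_upwards [hm] with z hz
    rw [← hz]; ring
  have hlim : Tendsto (fun z => h z ^ n • g (m z)) (𝓝 q) (𝓝 (h q ^ n • g q)) :=
    (hh.tendsto.pow n).smul (hg.continuousAt.tendsto.comp hmq)
  -- both sides of `f ∘ m - f q = f - f q` carry the factor `(z - q) ^ n`
  have heq : ∀ᶠ z in 𝓝[≠] q, h z ^ n • g (m z) = g z := by
    filter_upwards [nhdsWithin_le_nhds (hfg.and (hm.and (hfm.and (hmq.eventually hfg)))),
      self_mem_nhdsWithin] with z ⟨hz, hmz, hfmz, hfgm⟩ hzq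
    refine smul_right_injective E (pow_ne_zero n (sub_ne_zero.2 hzq)) ?_
    simp only [Pi.sub_apply] at hz hfgm ⊢
    rw [← hz, ← hfmz, hfgm, hmz, mul_pow, mul_smul]
  have hmult : h q ^ n • g q = g q :=
    tendsto_nhds_unique ((hlim.mono_left nhdsWithin_le_nhds).congr' heq)
      (hg.continuousAt.tendsto.mono_left nhdsWithin_le_nhds)
  exact hq (isOfFinOrder_iff_pow_eq_one.2
    ⟨n, n.pos_of_ne_zero hn, smul_left_injective 𝕜 hgq (hmult.trans (one_smul 𝕜 _).symm)⟩)

theorem slice_eq_of_mobius_invariant {F : ℂ × ℂ → ℂ}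
    (hF : DifferentiableOn ℂ F {p : ℂ × ℂ | p.1 ≠ p.2}) {a b c d p q : ℂ}
    (hdet : a * d - b * c = 1) (hqp : q ≠ p)
    (hp : c * p + d ≠ 0) (hfixp : (a * p + b) / (c * p + d) = p)
    (hq : c * q + d ≠ 0) (hfixq : (a * q + b) / (c * q + d) = q) (hmult : ‖c * q + d‖ ≠ 1)
    (hinv : ∀ z w : ℂ, z ≠ w → c * z + d ≠ 0 → c * w + d ≠ 0 →
      F ((a * z + b) / (c * z + d), (a * w + b) / (c * w + d)) = F (z, w))
    {z : ℂ} (hz : z ≠ p) : F (z, p) = F (q, p) := by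
  have hf : AnalyticOnNhd ℂ (fun z => F (z, p)) {p}ᶜ :=
    (hF.comp (differentiableOn_id.prodMk (differentiableOn_const p)) fun _ hz => hz).analyticOnNhd
      isOpen_compl_singleton
  have hden : ∀ᶠ z in 𝓝 q, c * z + d ≠ 0 :=
    (show ContinuousAt (fun z => c * z + d) q by fun_prop).eventually_ne hq
  have hlocal : ∀ᶠ z in 𝓝 q, F (z, p) = F (q, p) := by
    refine (hf q hqp).eventually_eq_of_comp_eq (m := fun z => (a * z + b) / (c * z + d))
      (h := fun z => ((c * z + d) * (c * q + d))⁻¹) (by fun_prop (disch := exact mul_ne_zero hq hq))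
      ?_ ?_ ?_
    · refine fun hfin => hmult ?_
      have := hfin.norm_eq_one
      rwa [norm_inv, norm_mul, inv_eq_one, ← sq,
        pow_eq_one_iff_of_nonneg (norm_nonneg _) two_ne_zero] at this
    · filter_upwards [hden] with z hz
      conv_lhs => rw [← hfixq]
      rw [mobius_sub_mobius a b c d z q hz hq, hdet, one_mul, div_eq_mul_inv]
    · filter_upwards [hden, isOpen_compl_singleton.mem_nhds hqp] with z hz hzp
      simpa only [hfixp] using hinv z p hzp hz hp
  exact hf.eqOn_of_preconnected_of_eventuallyEq analyticOnNhd_const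
    (isConnected_compl_singleton_of_one_lt_rank (by simp) p).isPreconnected hqp hlocal hz

theorem slice_eq_of_hyperbolic_invariant {F : ℂ × ℂ → ℂ}
    (hF : DifferentiableOn ℂ F {p : ℂ × ℂ | p.1 ≠ p.2}) {a b c d p : ℝ}
    (hdet : a * d - b * c = 1) (htr : 2 < |a + d|) (hc : c ≠ 0) (hp : c * p + d ≠ 0)
    (hfix : (a * p + b) / (c * p + d) = p)
    (hinv : ∀ z w : ℂ, z ≠ w → (c : ℂ) * z + d ≠ 0 → (c : ℂ) * w + d ≠ 0 →
      F (((a : ℂ) * z + b) / ((c : ℂ) * z + d), ((a : ℂ) * w + b) / ((c : ℂ) * w + d)) = F (z, w))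
    {z₁ z₂ : ℂ} (h₁ : z₁ ≠ p) (h₂ : z₂ ≠ p) : F (z₁, p) = F (z₂, p) := by
  obtain ⟨q, hqp, hq, hfixq, hmult⟩ := exists_fixedPoint_ne_of_two_lt_abs_trace hdet htr hc hp hfix
  have key {z : ℂ} (hz : z ≠ p) : F (z, p) = F (q, p) :=
    slice_eq_of_mobius_invariant (q := q) hF (by exact_mod_cast hdet) (by exact_mod_cast hqp)
      (by exact_mod_cast hp) (by exact_mod_cast hfix) (by exact_mod_cast hq)
      (by exact_mod_cast hfixq) (by rwa [← Complex.ofReal_mul, ← Complex.ofReal_add,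
        Complex.norm_real, Real.norm_eq_abs]) hinv hz
  rw [key h₁, key h₂]

theorem Preperfect.infinite_derivedSet_of_subset_closure {X : Type*} [TopologicalSpace X]
    [T1Space X] {Λ S : Set X} (hΛ : Preperfect Λ) (hne : Λ.Nonempty) (hΛS : Λ ⊆ closure S) :
    (derivedSet S).Infinite := by
  have hsub : Λ ⊆ derivedSet S := fun x hx =>
    derivedSet_closure S ▸ derivedSet_mono _ _ hΛS (hΛ x hx)
  obtain ⟨x, hx⟩ := hne
  exact (Set.Infinite.of_accPt (hΛ x hx)).mono hsub

theorem DifferentiableOn.analyticOnNhd_slice {F : ℂ × ℂ → ℂ}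
    (hF : DifferentiableOn ℂ F {p : ℂ × ℂ | p.1 ≠ p.2}) {z : ℂ} {U : Set ℂ} (hU : IsOpen U)
    (hzU : z ∉ U) : AnalyticOnNhd ℂ (fun w => F (z, w)) U :=
  (hF.comp ((differentiableOn_const z).prodMk differentiableOn_id)
    fun _ hw (h : z = _) => hzU (h ▸ hw)).analyticOnNhd hU

theorem eq_of_slices_eq {F : ℂ × ℂ → ℂ} (hF : DifferentiableOn ℂ F {p : ℂ × ℂ | p.1 ≠ p.2})
    {S : Set ℂ} (hS : (derivedSet S).Infinite)
    (hslice : ∀ s ∈ S, ∀ z₁ z₂ : ℂ, z₁ ≠ s → z₂ ≠ s → F (z₁, s) = F (z₂, s))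
    {z₁ z₂ w : ℂ} (h₁ : z₁ ≠ w) (h₂ : z₂ ≠ w) : F (z₁, w) = F (z₂, w) := by
  set U : Set ℂ := {z₁, z₂}ᶜ
  have hU : IsOpen U := (toFinite _).isClosed.isOpen_compl
  obtain ⟨x, hxS, hxU⟩ := (hS.sdiff (toFinite {z₁, z₂})).nonempty
  have hfreq : ∃ᶠ y in 𝓝[≠] x, F (z₁, y) = F (z₂, y) := by
    refine ((accPt_iff_frequently_nhdsNE.1 hxS).and_eventually
      (mem_nhdsWithin_of_mem_nhds (hU.mem_nhds hxU))).mono fun y ⟨hyS, hyU⟩ => ?_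
    simp only [mem_insert_iff, mem_singleton_iff, not_or] at hyU
    exact hslice y hyS z₁ z₂ (Ne.symm hyU.1) (Ne.symm hyU.2)
  refine (hF.analyticOnNhd_slice hU (by simp [U])).eqOn_of_preconnected_of_frequently_eq
    (hF.analyticOnNhd_slice hU (by simp [U]))
    ((toFinite _).countable.isConnected_compl_of_one_lt_rank (by simp)).isPreconnected hxU hfreq ?_
  simp [U, h₁.symm, h₂.symm]

theorem eq_of_forall_eq_left_of_forall_eq_right {α β : Type*} [Infinite α] {F : α × α → β}
    (hleft : ∀ z₁ z₂ w : α, z₁ ≠ w → z₂ ≠ w → F (z₁, w) = F (z₂, w))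
    (hright : ∀ z w₁ w₂ : α, z ≠ w₁ → z ≠ w₂ → F (z, w₁) = F (z, w₂))
    {p p' : α × α} (hp : p.1 ≠ p.2) (hp' : p'.1 ≠ p'.2) : F p = F p' := by
  obtain ⟨u, hu⟩ := (toFinite {p.2, p'.2}).infinite_compl.nonempty
  simp only [mem_compl_iff, mem_insert_iff, mem_singleton_iff, not_or] at hu
  calc F p = F (u, p.2) := hleft _ _ _ hp hu.1
    _ = F (u, p'.2) := hright _ _ _ hu.1 hu.2
    _ = F p' := (hleft _ _ _ hp' hu.2).symm

theorem rigidity_nonelementary_general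
    (F : ℂ × ℂ → ℂ)
    (hF : DifferentiableOn ℂ F {p : ℂ × ℂ | p.1 ≠ p.2})
    (P : Set ℝ)
    (hP : ∀ p ∈ P, ∃ a b c d : ℝ,
      a * d - b * c = 1 ∧ 2 < |a + d| ∧ c ≠ 0 ∧ c * p + d ≠ 0 ∧
      (a * p + b) / (c * p + d) = p ∧
      (∀ z w : ℂ, z ≠ w → (c : ℂ) * z + (d : ℂ) ≠ 0 → (c : ℂ) * w + (d : ℂ) ≠ 0 →
        F (((a : ℂ) * z + b) / ((c : ℂ) * z + d),
           ((a : ℂ) * w + b) / ((c : ℂ) * w + d)) = F (z, w)))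
    (Λ : Set ℂ)
    (hΛne : Λ.Nonempty)
    (hΛP : Λ ⊆ closure ((fun p : ℝ => (p : ℂ)) '' P))
    (hΛperf : ∀ x ∈ Λ, x ∈ closure (Λ \ {x})) :
    ∀ p ∈ {q : ℂ × ℂ | q.1 ≠ q.2}, ∀ p' ∈ {q : ℂ × ℂ | q.1 ≠ q.2},
      F p = F p' := by
  set S : Set ℂ := (fun p : ℝ => (p : ℂ)) '' P
  have hS : (derivedSet S).Infinite :=
    Preperfect.infinite_derivedSet_of_subset_closure
      (fun x hx => accPt_principal_iff_nhdsWithin.2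
        (mem_closure_iff_nhdsWithin_neBot.1 (hΛperf x hx))) hΛne hΛP
  have hFswap : DifferentiableOn ℂ (F ∘ Prod.swap) {p : ℂ × ℂ | p.1 ≠ p.2} :=
    hF.comp (differentiableOn_snd.prodMk differentiableOn_fst) fun _ hp => Ne.symm hp
  have hleft : ∀ s ∈ S, ∀ z₁ z₂ : ℂ, z₁ ≠ s → z₂ ≠ s → F (z₁, s) = F (z₂, s) := by
    rintro _ ⟨p, hp, rfl⟩ z₁ z₂ h₁ h₂
    obtain ⟨a, b, c, d, hdet, htr, hc, hpd, hfix, hinv⟩ := hP p hp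
    exact slice_eq_of_hyperbolic_invariant hF hdet htr hc hpd hfix hinv h₁ h₂
  have hright : ∀ s ∈ S, ∀ z₁ z₂ : ℂ, z₁ ≠ s → z₂ ≠ s →
      (F ∘ Prod.swap) (z₁, s) = (F ∘ Prod.swap) (z₂, s) := by
    rintro _ ⟨p, hp, rfl⟩ z₁ z₂ h₁ h₂
    obtain ⟨a, b, c, d, hdet, htr, hc, hpd, hfix, hinv⟩ := hP p hp
    exact slice_eq_of_hyperbolic_invariant hFswap hdet htr hc hpd hfix
      (fun z w hzw hz hw => hinv w z hzw.symm hw hz) h₁ h₂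
  intro p hp p' hp'
  exact eq_of_forall_eq_left_of_forall_eq_right (fun z₁ z₂ w => eq_of_slices_eq hF hS hleft)
    (fun z w₁ w₂ h₁ h₂ => eq_of_slices_eq hFswap hS hright h₁.symm h₂.symm) hp hp'

/-- Core of Theorem 4.1: a holomorphic function on `{(z,w) : z ≠ w}` which is
invariant under, for each `p` in a set `P ⊆ ℝ`, some hyperbolic real Möbius
transformation fixing `p`, is constant, provided there is a nonempty set
`Λ ⊆ ℝ ⊆ ℂ` without isolated points contained in the closure of `P`. -/
theorem rigidity_nonelementary
    (F : ℂ × ℂ → ℂ)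
    (hF : DifferentiableOn ℂ F {p : ℂ × ℂ | p.1 ≠ p.2})
    (P : Set ℝ)
    (hP : ∀ p ∈ P, ∃ a b c d : ℝ,
      a * d - b * c = 1 ∧ 2 < |a + d| ∧ c ≠ 0 ∧ c * p + d ≠ 0 ∧
      (a * p + b) / (c * p + d) = p ∧
      (∀ z w : ℂ, z ≠ w → (c : ℂ) * z + (d : ℂ) ≠ 0 → (c : ℂ) * w + (d : ℂ) ≠ 0 →
        F (((a : ℂ) * z + b) / ((c : ℂ) * z + d),
           ((a : ℂ) * w + b) / ((c : ℂ) * w + d)) = F (z, w)))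
    (Λ : Set ℂ)
    (hΛreal : Λ ⊆ Set.range ((↑) : ℝ → ℂ))
    (hΛne : Λ.Nonempty)
    (hΛP : Λ ⊆ closure ((fun p : ℝ => (p : ℂ)) '' P))
    (hΛperf : ∀ x ∈ Λ, x ∈ closure (Λ \ {x})) :
    ∀ p ∈ {q : ℂ × ℂ | q.1 ≠ q.2}, ∀ p' ∈ {q : ℂ × ℂ | q.1 ≠ q.2},
      F p = F p' :=
  rigidity_nonelementary_general F hF P hP Λ hΛne hΛP hΛperf
end

section
/- Let U ⊆ ℂ be open and connected, z₀ ∈ U, and let γ : ℂ → ℂ be analytic on U with γ(U) ⊆ U and γ(z₀) = z₀, such that (γ'(z₀))ⁿ ≠ 1 for every integer n ≥ 1 (where γ'(z₀) is the complex derivative of γ at z₀). If g : ℂ → ℂ is analytic on U and satisfies g(γ(z)) = g(z) for all z ∈ U, then g is constant on U, i.e. g(z) = g(z₀) for all z ∈ U. (This is step (i) of the proof of Theorem 4.1: all derivatives of g vanish at z₀ by induction, and g is constant by the identity theorem.) -/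
open Topology Filter


/-- Step (i) of the proof of Theorem 4.1: if `γ` is analytic on an open connected
set `U`, maps `U` into `U`, fixes `z₀ ∈ U`, and no positive power of `γ'(z₀)`
equals `1`, then any analytic `g` on `U` with `g ∘ γ = g` on `U` is constant. -/
theorem invariant_under_multiplier_is_constant
    (U : Set ℂ) (hUopen : IsOpen U) (hUconn : IsConnected U)
    (z₀ : ℂ) (hz₀ : z₀ ∈ U)
    (γ : ℂ → ℂ) (hγ : DifferentiableOn ℂ γ U)
    (hmaps : Set.MapsTo γ U U) (hfix : γ z₀ = z₀)
    (hmult : ∀ n : ℕ, 1 ≤ n → (deriv γ z₀) ^ n ≠ 1)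
    (g : ℂ → ℂ) (hg : DifferentiableOn ℂ g U)
    (hinv : ∀ z ∈ U, g (γ z) = g z) :
    ∀ z ∈ U, g z = g z₀ := by
  set f : ℂ → ℂ := fun z => g z - g z₀ with hf_def
  have hfU : AnalyticOnNhd ℂ f U :=
    ((hg.sub (differentiableOn_const _)).analyticOnNhd hUopen)
  have hγU : AnalyticOnNhd ℂ γ U := hγ.analyticOnNhd hUopen
  have hfz₀ : AnalyticAt ℂ f z₀ := hfU z₀ hz₀
  -- it suffices to show f vanishes in a neighborhood of z₀
  suffices hev0 : ∀ᶠ z in 𝓝 z₀, f z = 0 by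
    intro z hz
    have := hfU.eqOn_zero_of_preconnected_of_eventuallyEq_zero hUconn.isPreconnected
      hz₀ hev0 hz
    simpa [hf_def, sub_eq_zero] using this
  by_contra hne
  obtain ⟨m, h, hhan, hh0, hfac⟩ :=
    hfz₀.exists_eventuallyEq_pow_smul_nonzero_iff.mpr hne
  -- m ≥ 1 since f z₀ = 0
  have hfz0 : f z₀ = 0 := by simp [hf_def]
  have hm1 : 1 ≤ m := by
    rcases Nat.eq_zero_or_pos m with rfl | h1
    · exfalso
      have := hfac.self_of_nhds
      rw [hfz0] at this
      simp at this
      exact hh0 this.symm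
    · exact h1
  -- continuity facts
  have hγz₀ : DifferentiableAt ℂ γ z₀ := hγ.differentiableAt (hUopen.mem_nhds hz₀)
  have hγtend : Filter.Tendsto γ (𝓝 z₀) (𝓝 z₀) := by
    have := hγz₀.continuousAt.tendsto
    rwa [hfix] at this
  -- f ∘ γ = f eventually near z₀
  have hinv' : ∀ᶠ z in 𝓝 z₀, f (γ z) = f z := by
    filter_upwards [hUopen.mem_nhds hz₀] with z hz
    simp only [hf_def, hinv z hz]
  -- the factorization, pulled back along γ
  have hfacγ : ∀ᶠ z in 𝓝 z₀, f (γ z) = (γ z - z₀) ^ m • h (γ z) :=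
    hγtend.eventually hfac
  -- combine on the punctured neighborhood and divide by (z - z₀)^m
  have hkey : ∀ᶠ z in 𝓝[≠] z₀,
      ((γ z - z₀) / (z - z₀)) ^ m * h (γ z) = h z := by
    filter_upwards [nhdsWithin_le_nhds hinv', nhdsWithin_le_nhds hfac,
      nhdsWithin_le_nhds hfacγ, self_mem_nhdsWithin] with z h1 h2 h3 hz
    have hz' : z - z₀ ≠ 0 := sub_ne_zero.mpr hz
    have : (γ z - z₀) ^ m * h (γ z) = (z - z₀) ^ m * h z := by
      rw [← smul_eq_mul, ← smul_eq_mul, ← h2, ← h3, h1]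
    rw [div_pow, div_mul_eq_mul_div, this, mul_comm, mul_div_assoc,
      div_self (pow_ne_zero m hz'), mul_one]
  -- take the limit along 𝓝[≠] z₀
  have hslope : Filter.Tendsto (fun z => (γ z - z₀) / (z - z₀)) (𝓝[≠] z₀)
      (𝓝 (deriv γ z₀)) := by
    have := (hasDerivAt_iff_tendsto_slope.mp hγz₀.hasDerivAt)
    refine this.congr' ?_
    filter_upwards [self_mem_nhdsWithin] with z hz
    simp [slope_def_field, hfix, div_eq_div_iff]
  have hhcont : Filter.Tendsto h (𝓝 z₀) (𝓝 (h z₀)) := hhan.continuousAt.tendsto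
  have hLHS : Filter.Tendsto (fun z => ((γ z - z₀) / (z - z₀)) ^ m * h (γ z))
      (𝓝[≠] z₀) (𝓝 ((deriv γ z₀) ^ m * h z₀)) :=
    (hslope.pow m).mul ((hhcont.comp hγtend).mono_left nhdsWithin_le_nhds)
  have hRHS : Filter.Tendsto h (𝓝[≠] z₀) (𝓝 (h z₀)) :=
    hhcont.mono_left nhdsWithin_le_nhds
  have : (deriv γ z₀) ^ m * h z₀ = h z₀ :=
    tendsto_nhds_unique (hLHS.congr' hkey) hRHS
  field_simp at this
  exact hmult m hm1 this
end

section
/- Let U ⊆ ℂ × ℂ be open and connected, let h : ℂ × ℂ → ℂ be holomorphic on U, and let Λ ⊆ ℂ be a set with no isolated points, i.e. every x ∈ Λ lies in the closure of Λ \ {x}. Let C ∈ ℂ and suppose the set S = {(z,w) ∈ U : z ∈ Λ and w ∈ Λ} is nonempty and h(z,w) = C for all (z,w) ∈ S. Then h(z,w) = C for all (z,w) ∈ U. (This is step (iii) of the proof of Theorem 4.1: all partial derivatives of h vanish on S, hence h is constant on the connected set U.) -/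
/-! Slicing reduces everything to the one-variable identity theorem. Near a point of `Λ × Λ`,
`h(·, w) = C` for every `w ∈ Λ` because `Λ` accumulates in the first variable; hence `h(z, ·) = C`
on `Λ` for every `z`, and accumulation in the second variable gives `h = C` on a whole polydisc.
The same two-step argument shows that the interior of `{h = C}` is closed in `U`, so connectedness
of `U` finishes the proof. -/

open Metric Set Filter Topology

variable {E : Type*} [NormedAddCommGroup E] [NormedSpace ℂ E] [CompleteSpace E]

theorem DifferentiableOn.eqOn_const_of_frequently_eq {f : ℂ → E} {s : Set ℂ} {a : ℂ} {c : E}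
    (hf : DifferentiableOn ℂ f s) (hs : IsOpen s) (hs' : IsPreconnected s) (ha : a ∈ s)
    (hfreq : ∃ᶠ z in 𝓝[≠] a, f z = c) : EqOn f (fun _ ↦ c) s :=
  (hf.analyticOnNhd hs).eqOn_of_preconnected_of_frequently_eq analyticOnNhd_const hs' ha hfreq

section Prod

variable {h : ℂ × ℂ → E} {s t A B : Set ℂ} {c : E}

theorem eqOn_prod_of_frequently_mem (hd : DifferentiableOn ℂ h (s ×ˢ t))
    (hs : IsOpen s) (hs' : IsPreconnected s) (ht : IsOpen t) (ht' : IsPreconnected t)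
    {a b : ℂ} (ha : a ∈ s) (hb : b ∈ t)
    (hA : ∃ᶠ z in 𝓝[≠] a, z ∈ A) (hB : ∃ᶠ w in 𝓝[≠] b, w ∈ B)
    (hc : EqOn h (fun _ ↦ c) (s ×ˢ t ∩ A ×ˢ B)) : EqOn h (fun _ ↦ c) (s ×ˢ t) := by
  have hs_near : ∀ᶠ z in 𝓝[≠] a, z ∈ s := eventually_nhdsWithin_of_eventually_nhds
    (hs.mem_nhds ha)
  have ht_near : ∀ᶠ w in 𝓝[≠] b, w ∈ t := eventually_nhdsWithin_of_eventually_nhds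
    (ht.mem_nhds hb)
  have on_B : ∀ w ∈ t ∩ B, ∀ z ∈ s, h (z, w) = c := by
    rintro w ⟨hwt, hwB⟩
    refine (hd.comp (differentiableOn_id.prodMk (differentiableOn_const w))
      fun z hz ↦ ⟨hz, hwt⟩).eqOn_const_of_frequently_eq hs hs' ha ?_
    exact (hA.and_eventually hs_near).mono fun z ⟨hzA, hzs⟩ ↦ hc ⟨⟨hzs, hwt⟩, hzA, hwB⟩
  rintro ⟨z, w⟩ ⟨hz, hw⟩
  refine (hd.comp ((differentiableOn_const z).prodMk differentiableOn_id)
    fun w hw ↦ ⟨hz, hw⟩).eqOn_const_of_frequently_eq ht ht' hb ?_ hw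
  exact (hB.and_eventually ht_near).mono fun w ⟨hwB, hwt⟩ ↦ on_B w ⟨hwt, hwB⟩ z hz

theorem eqOn_prod_of_eventually_eq (hd : DifferentiableOn ℂ h (s ×ˢ t))
    (hs : IsOpen s) (hs' : IsPreconnected s) (ht : IsOpen t) (ht' : IsPreconnected t)
    {q : ℂ × ℂ} (hq : q ∈ s ×ˢ t) (hq' : ∀ᶠ x in 𝓝 q, h x = c) :
    EqOn h (fun _ ↦ c) (s ×ˢ t) := by
  rw [← Prod.mk.eta (p := q), nhds_prod_eq] at hq'
  obtain ⟨A, hA, B, hB, hAB⟩ := mem_prod_iff.mp hq'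
  exact eqOn_prod_of_frequently_mem hd hs hs' ht ht' hq.1 hq.2
    (eventually_nhdsWithin_of_eventually_nhds hA).frequently
    (eventually_nhdsWithin_of_eventually_nhds hB).frequently fun x hx ↦ hAB hx.2

end Prod

/-- Step (iii) of the proof of Theorem 4.1: a holomorphic function on an open
connected set `U ⊆ ℂ × ℂ` which is constant on the nonempty trace of `Λ × Λ`
on `U`, where `Λ` has no isolated points, is constant on `U`. -/
theorem constant_on_perfect_square_implies_constant
    (U : Set (ℂ × ℂ)) (hUopen : IsOpen U) (hUconn : IsConnected U)
    (h : ℂ × ℂ → ℂ) (hh : DifferentiableOn ℂ h U)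
    (Λ : Set ℂ) (hΛperf : ∀ x ∈ Λ, x ∈ closure (Λ \ {x}))
    (C : ℂ)
    (hSne : (U ∩ Λ ×ˢ Λ).Nonempty)
    (hval : ∀ p ∈ U ∩ Λ ×ˢ Λ, h p = C) :
    ∀ p ∈ U, h p = C := by
  have polydisc : ∀ p ∈ U, ∃ r > 0, ball p.1 r ×ˢ ball p.2 r ⊆ U := fun p hp ↦ by
    obtain ⟨r, hr, hsub⟩ := Metric.isOpen_iff.mp hUopen p hp
    exact ⟨r, hr, by rwa [ball_prod_same]⟩
  set V := {p | ∀ᶠ q in 𝓝 p, h q = C}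
  have hV_nonempty : (U ∩ V).Nonempty := by
    obtain ⟨p, hpU, hpΛ⟩ := hSne
    obtain ⟨r, hr, hsub⟩ := polydisc p hpU
    refine ⟨p, hpU, mem_of_superset (ball_mem_nhds p hr) ?_⟩
    rw [← ball_prod_same]
    exact eqOn_prod_of_frequently_mem (hh.mono hsub) isOpen_ball isPreconnected_ball
      isOpen_ball isPreconnected_ball (mem_ball_self hr) (mem_ball_self hr)
      (mem_closure_ne_iff_frequently_within.mp (hΛperf _ hpΛ.1))
      (mem_closure_ne_iff_frequently_within.mp (hΛperf _ hpΛ.2))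
      fun x hx ↦ hval x ⟨hsub hx.1, hx.2⟩
  have hV_closed : closure V ∩ U ⊆ V := by
    rintro p ⟨hpV, hpU⟩
    obtain ⟨r, hr, hsub⟩ := polydisc p hpU
    obtain ⟨q, hq, hqV⟩ := mem_closure_iff_nhds.mp hpV _ (ball_mem_nhds p hr)
    refine mem_of_superset (ball_mem_nhds p hr) ?_
    rw [← ball_prod_same] at hq ⊢
    exact eqOn_prod_of_eventually_eq (hh.mono hsub) isOpen_ball isPreconnected_ball
      isOpen_ball isPreconnected_ball hq hqV
  exact fun p hp ↦ (hUconn.isPreconnected.subset_of_closure_inter_subset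
    isOpen_setOfPred_eventually_nhds hV_nonempty hV_closed hp).self_of_nhds
end

section
/- Let c be a real number with c > 1 and let h : ℂ → ℂ be holomorphic on ℂ \ {0} with h(c·z) = h(z) for all z ∈ ℂ \ {0}. Then h is constant on ℂ \ {0}, i.e. h(z) = h(w) for all nonzero z, w ∈ ℂ. (This is the Laurent-series comparison step in the proof of Theorem 4.2: a function holomorphic on the punctured plane and invariant under multiplication by c > 1 has all Laurent coefficients aₙ with n ≠ 0 equal to zero.) -/
/-!
Invariance under `z ↦ c z` with `‖c‖ > 1` moves every nonzero point into the compact annulus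
`1 ≤ ‖z‖ ≤ ‖c‖`, so `h` is bounded on the punctured plane. Then `h ∘ exp` is a bounded entire
function, constant by Liouville's theorem, and `exp` maps `ℂ` onto the punctured plane.
-/

open Metric Set Bornology

section MulInvariant

variable {G₀ α : Type*} [GroupWithZero G₀] {f : G₀ → α} {c z : G₀}

theorem apply_pow_mul_eq_of_apply_mul_eq (hf : ∀ z, z ≠ 0 → f (c * z) = f z) (hc : c ≠ 0)
    (hz : z ≠ 0) (n : ℕ) : f (c ^ n * z) = f z := by
  induction n with
  | zero => rw [pow_zero, one_mul]
  | succ n ih => rw [pow_succ', mul_assoc, hf _ (mul_ne_zero (pow_ne_zero n hc) hz), ih]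

theorem apply_zpow_mul_eq_of_apply_mul_eq_s8 (hf : ∀ z, z ≠ 0 → f (c * z) = f z) (hc : c ≠ 0)
    (hz : z ≠ 0) (n : ℤ) : f (c ^ n * z) = f z := by
  obtain ⟨n, rfl | rfl⟩ := n.eq_nat_or_neg
  · rw [zpow_natCast, apply_pow_mul_eq_of_apply_mul_eq hf hc hz]
  · have hw : c ^ (-(n : ℤ)) * z ≠ 0 := mul_ne_zero (zpow_ne_zero _ hc) hz
    rw [← apply_pow_mul_eq_of_apply_mul_eq hf hc hw n, ← mul_assoc, zpow_neg, zpow_natCast,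
      mul_inv_cancel₀ (pow_ne_zero n hc), one_mul]

end MulInvariant

section Annulus

variable {𝕜 : Type*} [NormedDivisionRing 𝕜] {c z : 𝕜}

theorem exists_zpow_mul_mem_annulus (hc : 1 < ‖c‖) (hz : z ≠ 0) :
    ∃ n : ℤ, c ^ n * z ∈ closedBall (0 : 𝕜) ‖c‖ \ ball 0 1 := by
  have hc₀ : 0 < ‖c‖ := one_pos.trans hc
  obtain ⟨n, hn_le, hn_lt⟩ := exists_mem_Ico_zpow (norm_pos_iff.mpr hz) hc
  have hpow : 0 < ‖c‖ ^ n := zpow_pos hc₀ n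
  refine ⟨-n, ?_, ?_⟩
  · rw [mem_closedBall_zero_iff, norm_mul, norm_zpow, zpow_neg, inv_mul_le_iff₀ hpow,
      ← zpow_add_one₀ hc₀.ne']
    exact hn_lt.le
  · rw [mem_ball_zero_iff, not_lt, norm_mul, norm_zpow, zpow_neg, le_inv_mul_iff₀ hpow, mul_one]
    exact hn_le

theorem isBounded_image_compl_zero_of_apply_mul_eq [ProperSpace 𝕜] {α : Type*}
    [PseudoMetricSpace α] {f : 𝕜 → α} (hc : 1 < ‖c‖) (hf : ContinuousOn f {0}ᶜ)
    (hinv : ∀ z, z ≠ 0 → f (c * z) = f z) :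
    IsBounded (f '' {0}ᶜ) := by
  set K := closedBall (0 : 𝕜) ‖c‖ \ ball 0 1
  have hK : K ⊆ {0}ᶜ := fun z hz h0 => hz.2 (by simp [mem_singleton_iff.mp h0])
  refine ((isCompact_closedBall _ _).diff isOpen_ball |>.image_of_continuousOn
    (hf.mono hK)).isBounded.subset ?_
  rintro _ ⟨z, hz, rfl⟩
  obtain ⟨n, hn⟩ := exists_zpow_mul_mem_annulus hc hz
  have hc₀ : c ≠ 0 := norm_pos_iff.mp (one_pos.trans hc)
  exact ⟨_, hn, apply_zpow_mul_eq_of_apply_mul_eq_s8 hinv hc₀ hz n⟩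

end Annulus

theorem Complex.apply_eq_apply_of_differentiableOn_compl_zero {E : Type*} [NormedAddCommGroup E]
    [NormedSpace ℂ E] {f : ℂ → E} (hf : DifferentiableOn ℂ f {0}ᶜ) (hb : IsBounded (f '' {0}ᶜ))
    {z w : ℂ} (hz : z ≠ 0) (hw : w ≠ 0) : f z = f w := by
  have hdiff : Differentiable ℂ (f ∘ exp) := fun x =>
    (hf.differentiableAt (isOpen_compl_singleton.mem_nhds (exp_ne_zero x))).comp x
      (differentiable_exp x)
  have hbdd : IsBounded (range (f ∘ exp)) := by
    rwa [range_comp, range_exp]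
  obtain ⟨a, rfl⟩ : z ∈ range exp := by rwa [range_exp]
  obtain ⟨b, rfl⟩ : w ∈ range exp := by rwa [range_exp]
  exact hdiff.apply_eq_apply_of_bounded hbdd a b

/-- Laurent-series step in the proof of Theorem 4.2: a function holomorphic on
the punctured plane which is invariant under multiplication by a real `c > 1`
is constant on the punctured plane. -/
theorem invariant_on_punctured_plane_is_constant
    (c : ℝ) (hc : 1 < c) (h : ℂ → ℂ)
    (hh : DifferentiableOn ℂ h {z : ℂ | z ≠ 0})
    (hinv : ∀ z : ℂ, z ≠ 0 → h ((c : ℂ) * z) = h z) :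
    ∀ z w : ℂ, z ≠ 0 → w ≠ 0 → h z = h w := by
  have hc' : 1 < ‖(c : ℂ)‖ := by
    rwa [Complex.norm_real, Real.norm_of_nonneg (by linarith)]
  intro z w hz hw
  exact Complex.apply_eq_apply_of_differentiableOn_compl_zero hh
    (isBounded_image_compl_zero_of_apply_mul_eq hc' hh.continuousOn hinv) hz hw
end

section
/- Characterization of 𝒜(A_R) (equation (1.5) of Theorem 1.8): Let R > 1, let A_R = {w ∈ ℂ : 1/R < |w| < R}, let ℍ = {z ∈ ℂ : Im z > 0} be the upper half-plane, and let π : ℍ → A_R be the universal covering map π(z) = exp((2i·(log R)/π)·Log(z/i)), where Log is the principal branch of the complex logarithm. Then for a function f : A_R → ℂ the following are equivalent: (1) there exists F : ℂ × ℂ → ℂ defining a holomorphic function on G such that f(π(z)) = F(z, conj z) for all z ∈ ℍ; (2) there exists an entire function g : ℂ → ℂ such that f(w) = g(−i·tan((π/(2·log R))·log|w|)) for all w ∈ A_R (here log|w| and tan are real, and (π/(2·log R))·log|w| ∈ (−π/2, π/2) for w ∈ A_R). -/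
/-!
Write `μ = exp (π² / log R)`. The covering `π` is invariant under `z ↦ μ z`, maps `ℍ` onto `A_R`,
and `-i tan ((π / (2 log R)) log |π z|) = (z + z̄) / (z - z̄)`; this gives (2) ⇒ (1) with
`F (z, w) = g ((z + w) / (z - w))`. Conversely, the lift `F (z, z̄)` is invariant under `z ↦ μ z`.
The graph of conjugation is totally real, so `F` itself is invariant under `(z, w) ↦ (μ z, μ w)`.
Then `ξ ↦ F (e^ξ z, e^ξ w)` is entire with periods `log μ` and `2πi`, hence constant by
Liouville's theorem: `F` is invariant under all complex dilations, so it is a function of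
`(z + w) / (z - w)`.
-/

open Complex ComplexConjugate Set Filter Topology Function

section Holomorphic

variable {E : Type*} [NormedAddCommGroup E] [NormedSpace ℂ E]

theorem AnalyticOnNhd.eqOn_zero_of_eventually_ofReal {f : ℂ → E} {U : Set ℂ}
    (hf : AnalyticOnNhd ℂ f U) (hU : IsPreconnected U) {x : ℝ} (hx : (x : ℂ) ∈ U)
    (h₀ : ∀ᶠ t : ℝ in 𝓝[>] x, f t = 0) : EqOn f 0 U := by
  have hofReal : Tendsto ((↑) : ℝ → ℂ) (𝓝[>] x) (𝓝[≠] (x : ℂ)) :=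
    tendsto_nhdsWithin_of_tendsto_nhds_of_eventually_within _
      ((continuous_ofReal.tendsto x).mono_left nhdsWithin_le_nhds)
      (eventually_nhdsWithin_of_forall fun t ht => by simpa using ht.ne')
  exact hf.eqOn_zero_of_preconnected_of_frequently_eq_zero hU hx
    (hofReal.frequently h₀.frequently)

theorem DifferentiableOn.differentiableAt_of_fst_ne_snd {F : ℂ × ℂ → E}
    (hF : DifferentiableOn ℂ F {p | p.1 ≠ p.2}) {p : ℂ × ℂ} (hp : p.1 ≠ p.2) :
    DifferentiableAt ℂ F p :=
  hF.differentiableAt ((isOpen_ne_fun continuous_fst continuous_snd).mem_nhds hp)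

/-- In the coordinates `(ζ, η) ↦ (ζ + iη, ζ - iη)` the graph of conjugation over `ℍ` is
`ℝ × (0, ∞)`, so the one-variable identity theorem applies first in `ζ`, then in `η`. -/
theorem eqOn_zero_of_forall_conj [CompleteSpace E] {Φ : ℂ × ℂ → E}
    (hΦ : DifferentiableOn ℂ Φ {p | p.1 ≠ p.2})
    (h₀ : ∀ z : ℂ, 0 < z.im → Φ (z, conj z) = 0) : EqOn Φ 0 {p | p.1 ≠ p.2} := by
  have hne {ζ η : ℂ} (hη : η ≠ 0) : ζ + I * η ≠ ζ - I * η := by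
    intro h
    have : (2 * I) * η = 0 := by linear_combination h
    simp_all
  have hdiff {ζ η : ℂ} (hη : η ≠ 0) : DifferentiableAt ℂ Φ (ζ + I * η, ζ - I * η) :=
    hΦ.differentiableAt_of_fst_ne_snd (hne hη)
  have real_height (y : ℝ) (hy : 0 < y) (ζ : ℂ) : Φ (ζ + I * y, ζ - I * y) = 0 := by
    have hy0 : (y : ℂ) ≠ 0 := ofReal_ne_zero.2 hy.ne'
    refine AnalyticOnNhd.eqOn_zero_of_eventually_ofReal (U := univ) (x := 0)
      (f := fun ζ => Φ (ζ + I * y, ζ - I * y))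
      (DifferentiableOn.analyticOnNhd (fun ζ _ => ?_) isOpen_univ)
      isPreconnected_univ (mem_univ _) (Eventually.of_forall fun x => ?_) (mem_univ ζ)
    · exact ((hdiff hy0).comp (f := fun ζ => (ζ + I * y, ζ - I * y)) ζ
        (by fun_prop)).differentiableWithinAt
    · have : conj ((x : ℂ) + I * y) = x - I * y := by simp; ring
      simpa [this] using h₀ (x + I * y) (by simpa using hy)
  have hpre : IsPreconnected ({0}ᶜ : Set ℂ) :=
    (isConnected_compl_singleton_of_one_lt_rank (by simp) 0).isPreconnected
  have all_heights (ζ η : ℂ) (hη : η ≠ 0) : Φ (ζ + I * η, ζ - I * η) = 0 := by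
    refine AnalyticOnNhd.eqOn_zero_of_eventually_ofReal (U := {0}ᶜ) (x := 1)
      (f := fun η => Φ (ζ + I * η, ζ - I * η))
      (DifferentiableOn.analyticOnNhd (fun η hη => ?_) isOpen_compl_singleton)
      hpre (by simp) ?_ hη
    · exact ((hdiff hη).comp (f := fun η => (ζ + I * η, ζ - I * η)) η
        (by fun_prop)).differentiableWithinAt
    · filter_upwards [self_mem_nhdsWithin] with t ht
      exact real_height t (zero_lt_one.trans ht) ζ
  rintro ⟨z, w⟩ (hzw : z ≠ w)
  have hη : (z - w) / (2 * I) ≠ 0 := div_ne_zero (sub_ne_zero.2 hzw) (by simp)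
  show Φ (z, w) = 0
  convert all_heights ((z + w) / 2) _ hη using 2
  ext <;> field_simp <;> ring

theorem apply_smul_eq_of_apply_smul_conj_eq [CompleteSpace E] {F : ℂ × ℂ → E}
    (hF : DifferentiableOn ℂ F {p | p.1 ≠ p.2}) {c : ℂ} (hc : c ≠ 0)
    (h : ∀ z : ℂ, 0 < z.im → F (c • (z, conj z)) = F (z, conj z)) :
    ∀ p : ℂ × ℂ, p.1 ≠ p.2 → F (c • p) = F p := by
  have hdiff : DifferentiableOn ℂ (fun p => F (c • p) - F p) {p | p.1 ≠ p.2} := fun p hp =>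
    (((hF.differentiableAt_of_fst_ne_snd (by simpa [hc] using hp)).comp p
      (by fun_prop)).sub (hF.differentiableAt_of_fst_ne_snd hp)).differentiableWithinAt
  intro p hp
  exact sub_eq_zero.1 (eqOn_zero_of_forall_conj hdiff (fun z hz => sub_eq_zero.2 (h z hz)) hp)

theorem Differentiable.apply_eq_apply_of_periodic {h : ℂ → E} (hh : Differentiable ℂ h)
    {a b : ℝ} (ha : 0 < a) (hb : 0 < b) (hpa : Periodic h a) (hpb : Periodic h (b * I))
    (z w : ℂ) : h z = h w := by
  have hK : IsCompact (Icc 0 a ×ℂ Icc 0 b) := isCompact_Icc.reProdIm isCompact_Icc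
  refine hh.apply_eq_apply_of_bounded ((hK.image hh.continuous).isBounded.subset ?_) z w
  rintro _ ⟨ξ, rfl⟩
  refine ⟨ξ - toIcoDiv ha 0 ξ.re • (a : ℂ) - toIcoDiv hb 0 ξ.im • (b * I), ⟨?_, ?_⟩, ?_⟩
  · have := toIcoMod_mem_Ico' ha ξ.re
    rw [← self_sub_toIcoDiv_zsmul] at this
    simpa using Ico_subset_Icc_self this
  · have := toIcoMod_mem_Ico' hb ξ.im
    rw [← self_sub_toIcoDiv_zsmul] at this
    simpa using Ico_subset_Icc_self this
  · rw [hpb.sub_zsmul_eq, hpa.sub_zsmul_eq]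

theorem apply_smul_eq_of_apply_real_smul_eq {F : ℂ × ℂ → E}
    (hF : DifferentiableOn ℂ F {p | p.1 ≠ p.2}) {m : ℝ} (hm : 1 < m)
    (hinv : ∀ p : ℂ × ℂ, p.1 ≠ p.2 → F ((m : ℂ) • p) = F p)
    {p : ℂ × ℂ} (hp : p.1 ≠ p.2) {c : ℂ} (hc : c ≠ 0) : F (c • p) = F p := by
  have hne (a : ℂ) (ha : a ≠ 0) : (a • p).1 ≠ (a • p).2 := by
    simpa [ha] using hp
  have hdiff : Differentiable ℂ fun ξ => F (exp ξ • p) := fun ξ =>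
    (hF.differentiableAt_of_fst_ne_snd (hne _ (exp_ne_zero ξ))).comp ξ (by fun_prop)
  have hper_log : Periodic (fun ξ => F (exp ξ • p)) (Real.log m : ℂ) := fun ξ => by
    dsimp only
    rw [exp_add, ← ofReal_exp, Real.exp_log (by linarith), mul_comm, mul_smul,
      hinv _ (hne _ (exp_ne_zero ξ))]
  have hper_I : Periodic (fun ξ => F (exp ξ • p)) ((2 * Real.pi : ℝ) * I) := fun ξ => by
    push_cast
    simp only [exp_periodic ξ]
  simpa [exp_log hc] using
    hdiff.apply_eq_apply_of_periodic (Real.log_pos hm) (by positivity) hper_log hper_I (log c) 0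

theorem exists_differentiable_eq_of_apply_real_smul_eq {F : ℂ × ℂ → E}
    (hF : DifferentiableOn ℂ F {p | p.1 ≠ p.2}) {m : ℝ} (hm : 1 < m)
    (hinv : ∀ p : ℂ × ℂ, p.1 ≠ p.2 → F ((m : ℂ) • p) = F p) :
    ∃ g : ℂ → E, Differentiable ℂ g ∧ ∀ z w : ℂ, z ≠ w → F (z, w) = g ((z + w) / (z - w)) := by
  refine ⟨fun s => F (s + 1, s - 1), fun s => ?_, fun z w hzw => ?_⟩
  · have hs : s + 1 ≠ s - 1 := by
      intro h
      have : (2 : ℂ) = 0 := by linear_combination h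
      norm_num at this
    exact (hF.differentiableAt_of_fst_ne_snd hs).comp s (by fun_prop)
  · have hzw' : z - w ≠ 0 := sub_ne_zero.2 hzw
    rw [← apply_smul_eq_of_apply_real_smul_eq hF hm hinv (p := (z, w)) hzw
      (div_ne_zero two_ne_zero hzw')]
    congr 1
    rw [Prod.smul_mk, smul_eq_mul, smul_eq_mul]
    ext <;> field_simp <;> ring

end Holomorphic

theorem definesHolomorphicOnG_comp_div {g : ℂ → ℂ} (hg : Differentiable ℂ g) :
    DefinesHolomorphicOnG fun p => g ((p.1 + p.2) / (p.1 - p.2)) := by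
  refine ⟨?_, ⟨fun p => g ((p.1 * p.2 + 1) / (p.1 * p.2 - 1)), ?_, fun z v hv hzv => ?_⟩,
    ⟨fun p => g ((1 + p.1 * p.2) / (1 - p.1 * p.2)), ?_, fun u w hu huw => ?_⟩⟩
  · refine hg.comp_differentiableOn fun p (hp : _ ≠ _) => DifferentiableAt.differentiableWithinAt ?_
    fun_prop (disch := exact sub_ne_zero.2 hp)
  · refine hg.comp_differentiableOn fun p (hp : _ ≠ _) => DifferentiableAt.differentiableWithinAt ?_
    fun_prop (disch := exact sub_ne_zero.2 hp)
  · have : z * v - 1 ≠ 0 := sub_ne_zero.2 hzv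
    field_simp
  · refine hg.comp_differentiableOn fun p (hp : _ ≠ _) => DifferentiableAt.differentiableWithinAt ?_
    fun_prop (disch := exact sub_ne_zero.2 hp.symm)
  · have : 1 - u * w ≠ 0 := sub_ne_zero.2 (Ne.symm huw)
    field_simp

theorem Real.abs_log_lt_log_iff {x R : ℝ} (hx : 0 < x) (hR : 0 < R) :
    |Real.log x| < Real.log R ↔ 1 / R < x ∧ x < R := by
  rw [abs_lt, ← Real.log_inv, Real.log_lt_log_iff (by positivity) hx, Real.log_lt_log_iff hx hR,
    one_div]

noncomputable def annulusCover (R : ℝ) (z : ℂ) : ℂ :=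
  exp ((2 * I * (Real.log R : ℂ) / (Real.pi : ℂ)) * log (z / I))

theorem log_norm_annulusCover (R : ℝ) (z : ℂ) :
    Real.log ‖annulusCover R z‖ = -(2 * Real.log R / Real.pi) * arg (z / I) := by
  have : 2 * I * (Real.log R : ℂ) / (Real.pi : ℂ) = ((2 * Real.log R / Real.pi : ℝ) : ℂ) * I := by
    push_cast; ring
  rw [annulusCover, norm_exp, Real.log_exp, this, mul_assoc, re_ofReal_mul]
  simp [log_im]

theorem abs_arg_div_I_lt_pi_div_two {z : ℂ} (hz : 0 < z.im) : |arg (z / I)| < Real.pi / 2 :=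
  abs_arg_lt_pi_div_two_iff.2 (Or.inl (by simpa [div_I] using hz))

theorem neg_I_mul_tan_log_norm_annulusCover {R : ℝ} (hR : Real.log R ≠ 0) (z : ℂ) :
    -I * (Real.tan (Real.pi / (2 * Real.log R) * Real.log ‖annulusCover R z‖) : ℂ) =
      (z + conj z) / (z - conj z) := by
  have harg : Real.pi / (2 * Real.log R) * Real.log ‖annulusCover R z‖ = -arg (z / I) := by
    rw [log_norm_annulusCover]
    field_simp
  rw [harg, Real.tan_neg, tan_arg, add_conj, sub_conj]
  simp only [div_I, mul_re, mul_im, neg_re, neg_im, I_re, I_im]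
  push_cast
  simp only [div_eq_mul_inv, mul_inv, inv_I]
  ring

theorem annulusCover_mem_annulus {R : ℝ} (hR : 1 < R) {z : ℂ} (hz : 0 < z.im) :
    1 / R < ‖annulusCover R z‖ ∧ ‖annulusCover R z‖ < R := by
  have hlogR : 0 < Real.log R := Real.log_pos hR
  have hpos : 0 < ‖annulusCover R z‖ := norm_pos_iff.2 (exp_ne_zero _)
  refine (Real.abs_log_lt_log_iff hpos (by linarith)).1 ?_
  rw [log_norm_annulusCover, abs_mul, abs_neg, abs_of_pos (by positivity)]
  calc 2 * Real.log R / Real.pi * |arg (z / I)|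
      < 2 * Real.log R / Real.pi * (Real.pi / 2) := by gcongr; exact abs_arg_div_I_lt_pi_div_two hz
    _ = Real.log R := by field_simp

-- `μ = exp (π² / log R)` is chosen so that `(2i log R / π) · log μ = 2πi`.
theorem annulusCover_real_mul {R : ℝ} (hR : Real.log R ≠ 0) {z : ℂ} (hz : z ≠ 0) :
    annulusCover R (Real.exp (Real.pi ^ 2 / Real.log R) * z) = annulusCover R z := by
  have hlogR : (Real.log R : ℂ) ≠ 0 := ofReal_ne_zero.2 hR
  rw [annulusCover, annulusCover, mul_div_assoc (Real.exp _ : ℂ),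
    log_ofReal_mul (Real.exp_pos _) (div_ne_zero hz I_ne_zero), Real.log_exp, mul_add, exp_add]
  convert one_mul _
  rw [← exp_two_pi_mul_I]
  congr 1
  push_cast
  field_simp

theorem exists_annulusCover_eq {R : ℝ} (hR : 1 < R) {w : ℂ} (hw₁ : 1 / R < ‖w‖) (hw₂ : ‖w‖ < R) :
    ∃ z : ℂ, 0 < z.im ∧ annulusCover R z = w := by
  have hlogR : 0 < Real.log R := Real.log_pos hR
  have hw : 0 < ‖w‖ := (one_div_pos.2 (by linarith)).trans hw₁
  set η : ℂ := -((Real.pi / (2 * Real.log R) : ℝ) : ℂ) * I * log w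
  have hη : |η.im| < Real.pi / 2 := by
    have hlog := (Real.abs_log_lt_log_iff hw (by linarith)).2 ⟨hw₁, hw₂⟩
    have : η.im = -(Real.pi / (2 * Real.log R)) * Real.log ‖w‖ := by
      simp only [η, neg_mul, neg_im, mul_assoc, im_ofReal_mul, I_mul_im, log_re]
    rw [this, abs_mul, abs_neg, abs_of_pos (by positivity)]
    calc Real.pi / (2 * Real.log R) * |Real.log ‖w‖|
        < Real.pi / (2 * Real.log R) * Real.log R := by gcongr
      _ = Real.pi / 2 := by field_simp
  obtain ⟨hη₁, hη₂⟩ := abs_lt.1 hη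
  refine ⟨I * exp η, ?_, ?_⟩
  · have : 0 < Real.cos η.im := Real.cos_pos_of_mem_Ioo ⟨hη₁, hη₂⟩
    simpa [exp_re] using mul_pos (Real.exp_pos η.re) this
  · rw [annulusCover, mul_div_cancel_left₀ _ I_ne_zero,
      log_exp (by linarith [Real.pi_pos]) (by linarith [Real.pi_pos])]
    convert exp_log (norm_pos_iff.1 hw) using 2
    have : (Real.log R : ℂ) ≠ 0 := ofReal_ne_zero.2 hlogR.ne'
    simp only [η]
    push_cast
    field_simp
    linear_combination (-log w) * I_sq

open Complex in
/-- Characterization of `𝒜(A_R)` (equation (1.5) of Theorem 1.8): `f` lifts under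
the universal covering `π(z) = exp((2i log R/π) Log(z/i))` of the annulus
`A_R = {1/R < |w| < R}` to `F(z, conj z)` for some `F ∈ H(G)` iff
`f(w) = g(-i tan((π/(2 log R)) log |w|))` for some entire `g`. -/
theorem mem_A_annulus_iff (R : ℝ) (hR : 1 < R) (f : ℂ → ℂ) :
    (∃ F : ℂ × ℂ → ℂ, DefinesHolomorphicOnG F ∧
      ∀ z : ℂ, 0 < z.im →
        f (Complex.exp ((2 * Complex.I * (Real.log R : ℂ) / (Real.pi : ℂ)) *
            Complex.log (z / Complex.I))) = F (z, (starRingEnd ℂ) z)) ↔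
    (∃ g : ℂ → ℂ, Differentiable ℂ g ∧
      ∀ w : ℂ, 1 / R < ‖w‖ → ‖w‖ < R →
        f w = g (-Complex.I *
          (Real.tan ((Real.pi / (2 * Real.log R)) * Real.log (‖w‖)) : ℂ))) := by
  have hlogR : 0 < Real.log R := Real.log_pos hR
  constructor
  · rintro ⟨F, ⟨hF, -, -⟩, hlift⟩
    set μ : ℝ := Real.exp (Real.pi ^ 2 / Real.log R)
    have hμ : 1 < μ := Real.one_lt_exp_iff.2 (by positivity)
    have hinv := apply_smul_eq_of_apply_smul_conj_eq hF (c := μ)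
      (ofReal_ne_zero.2 (by positivity)) fun z hz => by
        have hμz : 0 < ((μ : ℂ) * z).im := by simpa using mul_pos (by positivity) hz
        have hconj : conj ((μ : ℂ) * z) = μ * conj z := by simp
        rw [Prod.smul_mk, smul_eq_mul, smul_eq_mul, ← hconj, ← hlift _ hμz, ← hlift z hz]
        exact congrArg f (annulusCover_real_mul hlogR.ne' (by rintro rfl; simp at hz))
    obtain ⟨g, hg, hFg⟩ := exists_differentiable_eq_of_apply_real_smul_eq hF hμ hinv
    refine ⟨g, hg, fun w hw₁ hw₂ => ?_⟩
    obtain ⟨z, hz, rfl⟩ := exists_annulusCover_eq hR hw₁ hw₂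
    rw [neg_I_mul_tan_log_norm_annulusCover hlogR.ne', ← hFg _ _ fun h =>
      hz.ne' (conj_eq_iff_im.1 h.symm)]
    exact hlift z hz
  · rintro ⟨g, hg, hfg⟩
    refine ⟨_, definesHolomorphicOnG_comp_div hg, fun z hz => ?_⟩
    obtain ⟨hw₁, hw₂⟩ := annulusCover_mem_annulus hR hz
    exact (hfg _ hw₁ hw₂).trans (congrArg g (neg_I_mul_tan_log_norm_annulusCover hlogR.ne' z))
end

section
/- Convergence of the annulus star-product series (claimed in Theorem 1.8): Let ℏ ∈ 𝒟 := ℂ \ ({0} ∪ {−1/k : k ∈ ℕ, k ≥ 1}), and define c₀(ℏ) = 1 and cₙ(ℏ) = ℏⁿ / ∏_{j=0}^{n−1}(1 + j·ℏ) for n ≥ 1. Then for all entire functions g, g̃ : ℂ → ℂ, the series ∑_{n=0}^∞ (cₙ(ℏ)/n!)·(w² − 1)ⁿ·g⁽ⁿ⁾(w)·g̃⁽ⁿ⁾(w) converges absolutely for every w ∈ ℂ, and its partial sums converge uniformly on every compact subset of ℂ. -/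
open scoped BigOperators

open Filter Metric Complex Topology

/-- The coefficients `c_n(ℏ)` of the Wick star product:
`c_0(ℏ) = 1` and `c_n(ℏ) = ℏⁿ / ∏_{j=0}^{n-1} (1 + jℏ)` for `n ≥ 1`. -/
noncomputable def starCoeff (ℏ : ℂ) (n : ℕ) : ℂ :=
  if n = 0 then 1 else ℏ ^ n / ∏ j ∈ Finset.range n, (1 + (j : ℂ) * ℏ)

lemma starCoeff_succ (ℏ : ℂ) (n : ℕ) :
    starCoeff ℏ (n + 1) = starCoeff ℏ n * (ℏ / (1 + (n : ℂ) * ℏ)) := by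
  cases n with
  | zero => simp [starCoeff]
  | succ m =>
      simp only [starCoeff, Nat.succ_ne_zero, if_false]
      rw [Finset.prod_range_succ, pow_succ, ← div_mul_div_comm]

lemma cauchy_bound {g : ℂ → ℂ} (hg : Differentiable ℂ g) {R : NNReal} (hR : 0 < R)
    {C : ℝ} (hC0 : 0 ≤ C) (w : ℂ)
    (hC : ∀ z ∈ Metric.sphere w (R : ℝ), ‖g z‖ ≤ C) (n : ℕ) :
    ‖iteratedDeriv n g w‖ ≤ n.factorial * C * ((R : ℝ)⁻¹) ^ n := by
  have hp : HasFPowerSeriesOnBall g (cauchyPowerSeries g w R) w R :=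
    (hg.differentiableOn).hasFPowerSeriesOnBall hR
  have h1 : iteratedDeriv n g w = n.factorial • (cauchyPowerSeries g w R n fun _ => (1 : ℂ)) := by
    rw [iteratedDeriv_eq_iteratedFDeriv, ← hp.factorial_smul 1 n]
  have hRpos : (0 : ℝ) < R := hR
  have hnorm : ‖cauchyPowerSeries g w R n‖ ≤ C * ((R : ℝ)⁻¹) ^ n := by
    refine (norm_cauchyPowerSeries_le g w R n).trans ?_
    have h2 : (∫ θ : ℝ in (0)..2 * Real.pi, ‖g (circleMap w R θ)‖) ≤
        ∫ _ : ℝ in (0)..2 * Real.pi, C := by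
      apply intervalIntegral.integral_mono_on Real.two_pi_pos.le
      · exact ((hg.continuous.comp (continuous_circleMap w R)).norm).intervalIntegrable _ _
      · exact intervalIntegrable_const
      · intro θ _
        exact hC _ (circleMap_mem_sphere w hRpos.le θ)
    have h3 : (2 * Real.pi)⁻¹ * ∫ θ : ℝ in (0)..2 * Real.pi, ‖g (circleMap w R θ)‖ ≤ C := by
      rw [intervalIntegral.integral_const, smul_eq_mul, sub_zero] at h2
      calc (2 * Real.pi)⁻¹ * ∫ θ : ℝ in (0)..2 * Real.pi, ‖g (circleMap w R θ)‖
          ≤ (2 * Real.pi)⁻¹ * (2 * Real.pi * C) := by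
            gcongr

        _ = C := by field_simp
    have habs : |(R : ℝ)| = (R : ℝ) := abs_of_nonneg R.coe_nonneg
    rw [habs]
    gcongr

  calc ‖iteratedDeriv n g w‖
      = (n.factorial : ℝ) * ‖cauchyPowerSeries g w R n fun _ => (1 : ℂ)‖ := by
        rw [h1, nsmul_eq_mul, norm_mul, Complex.norm_natCast]
    _ ≤ (n.factorial : ℝ) * ‖cauchyPowerSeries g w R n‖ := by
        gcongr
        calc ‖cauchyPowerSeries g w R n fun _ => (1 : ℂ)‖
            ≤ ‖cauchyPowerSeries g w R n‖ * ∏ _i : Fin n, ‖(1 : ℂ)‖ :=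
              (cauchyPowerSeries g w R n).le_opNorm _
          _ = ‖cauchyPowerSeries g w R n‖ := by simp
    _ ≤ (n.factorial : ℝ) * (C * ((R : ℝ)⁻¹) ^ n) := by
        gcongr

    _ = n.factorial * C * ((R : ℝ)⁻¹) ^ n := by ring

lemma norm_natCast_add_one (n : ℕ) : ‖((n : ℂ) + 1)‖ = (n : ℝ) + 1 := by
  rw [show ((n : ℂ) + 1) = ((n + 1 : ℕ) : ℂ) by push_cast; ring, Complex.norm_natCast]
  push_cast
  ring

lemma key_bound (ℏ : ℂ) (hℏ0 : ℏ ≠ 0) (hfac : ∀ j : ℕ, (1 : ℂ) + (j : ℂ) * ℏ ≠ 0)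
    (g g' : ℂ → ℂ) (hg : Differentiable ℂ g) (hg' : Differentiable ℂ g')
    (K : Set ℂ) (hK : IsCompact K) :
    ∃ u : ℕ → ℝ, Summable u ∧ ∀ n : ℕ, ∀ w ∈ K,
      ‖(starCoeff ℏ n / (n.factorial : ℂ)) * (w ^ 2 - 1) ^ n *
        iteratedDeriv n g w * iteratedDeriv n g' w‖ ≤ u n := by
  -- radius of a ball containing K
  obtain ⟨R, hKR⟩ := hK.isBounded.subset_closedBall 0
  set R0 : ℝ := max R 0 with hR0def
  have hR0 : 0 ≤ R0 := le_max_right _ _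
  have hKR0 : K ⊆ Metric.closedBall 0 R0 :=
    hKR.trans (Metric.closedBall_subset_closedBall (le_max_left _ _))
  set A : ℝ := R0 ^ 2 + 1 with hAdef
  have hA : 0 < A := by positivity
  set ρr : ℝ := Real.sqrt (4 * A) with hρdef
  have hρ : 0 < ρr := Real.sqrt_pos.2 (by linarith)
  have hρ2 : ρr ^ 2 = 4 * A := Real.sq_sqrt (by linarith)
  set ρ : NNReal := ⟨ρr, hρ.le⟩ with hρ'def
  have hρcoe : (ρ : ℝ) = ρr := rfl
  have hρpos : 0 < ρ := by exact_mod_cast hρ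
  -- sup bounds on the enlarged ball
  obtain ⟨C, hCb⟩ := (isCompact_closedBall (0 : ℂ) (R0 + ρr)).exists_bound_of_continuousOn
    hg.continuous.continuousOn
  obtain ⟨C', hC'b⟩ := (isCompact_closedBall (0 : ℂ) (R0 + ρr)).exists_bound_of_continuousOn
    hg'.continuous.continuousOn
  set M : ℝ := max C 1 with hMdef
  set M' : ℝ := max C' 1 with hM'def
  have hM1 : (1 : ℝ) ≤ M := le_max_right _ _
  have hM'1 : (1 : ℝ) ≤ M' := le_max_right _ _
  have hM0 : 0 < M := lt_of_lt_of_le one_pos hM1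
  have hM'0 : 0 < M' := lt_of_lt_of_le one_pos hM'1
  have hsphere : ∀ w ∈ K, ∀ z ∈ Metric.sphere w (ρ : ℝ), z ∈ Metric.closedBall (0 : ℂ) (R0 + ρr) := by
    intro w hw z hz
    rw [Metric.mem_sphere] at hz
    rw [Metric.mem_closedBall] at *
    calc dist z 0 ≤ dist z w + dist w 0 := dist_triangle _ _ _
      _ ≤ ρr + R0 := by
          have := hKR0 hw
          rw [Metric.mem_closedBall] at this
          rw [hz, hρcoe]; linarith
      _ = R0 + ρr := by ring
  -- derivative bounds
  have hDg : ∀ n : ℕ, ∀ w ∈ K, ‖iteratedDeriv n g w‖ ≤ n.factorial * M * (ρr⁻¹) ^ n := by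
    intro n w hw
    exact cauchy_bound hg hρpos hM0.le w
      (fun z hz => le_trans (hCb z (hsphere w hw z hz)) (le_max_left _ _)) n
  have hDg' : ∀ n : ℕ, ∀ w ∈ K, ‖iteratedDeriv n g' w‖ ≤ n.factorial * M' * (ρr⁻¹) ^ n := by
    intro n w hw
    exact cauchy_bound hg' hρpos hM'0.le w
      (fun z hz => le_trans (hC'b z (hsphere w hw z hz)) (le_max_left _ _)) n
  -- the dominating sequence
  refine ⟨fun n => ‖starCoeff ℏ n‖ * n.factorial * (M * M') * (1 / 4) ^ n, ?_, ?_⟩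
  · -- Summability by the ratio test
    have hcne : ∀ n, starCoeff ℏ n ≠ 0 := by
      intro n
      unfold starCoeff
      split
      · exact one_ne_zero
      · exact div_ne_zero (pow_ne_zero _ hℏ0)
          (Finset.prod_ne_zero_iff.mpr fun j _ => hfac j)
    have hupos : ∀ n : ℕ, 0 < ‖starCoeff ℏ n‖ * n.factorial * (M * M') * (1 / 4 : ℝ) ^ n := by
      intro n
      have h1 : 0 < ‖starCoeff ℏ n‖ := norm_pos_iff.2 (hcne n)
      have h2 : (0 : ℝ) < n.factorial := by exact_mod_cast n.factorial_pos
      positivity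
    -- limit of complex ratio
    have h0 : Tendsto (fun n : ℕ => ((1 : ℂ) + (n : ℂ) * ℏ) / ((n : ℂ) + 1)) atTop (𝓝 ℏ) := by
      have hkey : ∀ n : ℕ, ((1 : ℂ) + (n : ℂ) * ℏ) / ((n : ℂ) + 1)
          = ((1 : ℂ) - ℏ) / ((n : ℂ) + 1) + ℏ := by
        intro n
        have hne : ((n : ℂ) + 1) ≠ 0 := by
          rw [show ((n : ℂ) + 1) = ((n + 1 : ℕ) : ℂ) by push_cast; ring]
          exact_mod_cast n.succ_ne_zero
        field_simp
        ring
      simp only [hkey]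
      have hz : Tendsto (fun n : ℕ => ((1 : ℂ) - ℏ) / ((n : ℂ) + 1)) atTop (𝓝 0) := by
        have hb : ∀ n : ℕ, ‖((1 : ℂ) - ℏ) / ((n : ℂ) + 1)‖ = ‖(1 : ℂ) - ℏ‖ / ((n : ℝ) + 1) := by
          intro n
          rw [norm_div, norm_natCast_add_one]
        refine squeeze_zero_norm (fun n => le_of_eq (hb n)) ?_
        exact Tendsto.div_atTop tendsto_const_nhds
          (tendsto_atTop_add_const_right atTop 1 tendsto_natCast_atTop_atTop)
      simpa using hz.add (tendsto_const_nhds (x := ℏ))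
    have h1 : Tendsto (fun n : ℕ => ℏ * ((n : ℂ) + 1) / (1 + (n : ℂ) * ℏ)) atTop (𝓝 1) := by
      have h2 := Filter.Tendsto.div (tendsto_const_nhds (x := ℏ)) h0 hℏ0
      rw [div_self hℏ0] at h2
      exact h2.congr fun n => by rw [Pi.div_apply, div_div_eq_mul_div]
    -- ratio identity
    have hratio : ∀ n : ℕ,
        (‖starCoeff ℏ (n + 1)‖ * (n + 1).factorial * (M * M') * (1 / 4 : ℝ) ^ (n + 1))
          = (‖ℏ * ((n : ℂ) + 1) / (1 + (n : ℂ) * ℏ)‖ * (1 / 4))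
            * (‖starCoeff ℏ n‖ * n.factorial * (M * M') * (1 / 4 : ℝ) ^ n) := by
      intro n
      rw [starCoeff_succ]
      simp only [norm_mul, norm_div, norm_natCast_add_one, Nat.factorial_succ, pow_succ,
        Nat.cast_mul, Nat.cast_add, Nat.cast_one]
      push_cast
      ring
    apply summable_of_ratio_test_tendsto_lt_one (l := 1 / 4) (by norm_num)
      (Filter.Eventually.of_forall fun n => (hupos n).ne')
    have : Tendsto (fun n : ℕ => ‖ℏ * ((n : ℂ) + 1) / (1 + (n : ℂ) * ℏ)‖ * (1 / 4 : ℝ))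
        atTop (𝓝 (1 / 4)) := by
      have := (h1.norm).mul_const (1 / 4 : ℝ)
      simpa using this
    apply this.congr'
    filter_upwards with n
    rw [Real.norm_of_nonneg (hupos (n + 1)).le, Real.norm_of_nonneg (hupos n).le, hratio n,
      mul_div_cancel_right₀ _ (hupos n).ne']
  · -- termwise bound
    intro n w hw
    have hw2 : ‖w ^ 2 - 1‖ ≤ A := by
      calc ‖w ^ 2 - 1‖ ≤ ‖w ^ 2‖ + ‖(1 : ℂ)‖ := norm_sub_le _ _
        _ = ‖w‖ ^ 2 + 1 := by rw [norm_pow, norm_one]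
        _ ≤ R0 ^ 2 + 1 := by
            have := hKR0 hw
            rw [Metric.mem_closedBall, dist_zero_right] at this
            gcongr
        _ = A := rfl
    have hfacR : (0 : ℝ) < n.factorial := by exact_mod_cast n.factorial_pos
    have hx : A * (ρr⁻¹) ^ 2 = 1 / 4 := by
      rw [inv_pow, hρ2]
      rw [eq_div_iff (by norm_num : (4:ℝ) ≠ 0)]
      field_simp
    calc ‖(starCoeff ℏ n / (n.factorial : ℂ)) * (w ^ 2 - 1) ^ n *
        iteratedDeriv n g w * iteratedDeriv n g' w‖
        = ‖starCoeff ℏ n‖ / n.factorial * ‖w ^ 2 - 1‖ ^ n *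
            ‖iteratedDeriv n g w‖ * ‖iteratedDeriv n g' w‖ := by
          rw [norm_mul, norm_mul, norm_mul, norm_div, norm_pow, Complex.norm_natCast]
      _ ≤ ‖starCoeff ℏ n‖ / n.factorial * A ^ n *
            (n.factorial * M * (ρr⁻¹) ^ n) * (n.factorial * M' * (ρr⁻¹) ^ n) := by
          gcongr ?_ * ?_ * ?_
          · exact mul_le_mul_of_nonneg_left
              (pow_le_pow_left₀ (norm_nonneg _) hw2 n) (by positivity)
          · exact hDg n w hw
          · exact hDg' n w hw
      _ = ‖starCoeff ℏ n‖ * n.factorial * (M * M') * (A * (ρr⁻¹) ^ 2) ^ n := by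
          rw [mul_pow, div_eq_mul_inv]
          rw [show ((ρr⁻¹) ^ 2) ^ n = (ρr⁻¹) ^ n * (ρr⁻¹) ^ n by rw [← pow_mul, two_mul, pow_add]]
          field_simp
      _ = ‖starCoeff ℏ n‖ * n.factorial * (M * M') * (1 / 4 : ℝ) ^ n := by rw [hx]

/-- Convergence of the annulus star-product series (Theorem 1.8): for
`ℏ` in the deformation domain `𝒟 = ℂ \ {0, -1, -1/2, ...}` and entire `g, g̃`,
the series `∑ (c_n(ℏ)/n!) (w²-1)ⁿ g⁽ⁿ⁾(w) g̃⁽ⁿ⁾(w)` converges absolutely at every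
`w ∈ ℂ` and its partial sums converge uniformly on every compact subset of `ℂ`. -/
theorem annulus_star_series_converges
    (ℏ : ℂ) (hℏ0 : ℏ ≠ 0) (hℏk : ∀ k : ℕ, 1 ≤ k → ℏ ≠ -(1 / (k : ℂ)))
    (g g' : ℂ → ℂ) (hg : Differentiable ℂ g) (hg' : Differentiable ℂ g') :
    (∀ w : ℂ, Summable (fun n : ℕ =>
      ‖(starCoeff ℏ n / (n.factorial : ℂ)) * (w ^ 2 - 1) ^ n *
        iteratedDeriv n g w * iteratedDeriv n g' w‖)) ∧
    (∀ K : Set ℂ, IsCompact K →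
      TendstoUniformlyOn
        (fun (N : ℕ) (w : ℂ) => ∑ n ∈ Finset.range N,
          (starCoeff ℏ n / (n.factorial : ℂ)) * (w ^ 2 - 1) ^ n *
            iteratedDeriv n g w * iteratedDeriv n g' w)
        (fun w : ℂ => ∑' n : ℕ,
          (starCoeff ℏ n / (n.factorial : ℂ)) * (w ^ 2 - 1) ^ n *
            iteratedDeriv n g w * iteratedDeriv n g' w)
        Filter.atTop K) := by
  have hfac : ∀ j : ℕ, (1 : ℂ) + (j : ℂ) * ℏ ≠ 0 := by
    intro j
    cases j with
    | zero => simp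
    | succ m =>
        intro h
        apply hℏk (m + 1) (Nat.succ_le_succ (Nat.zero_le m))
        have hne : ((m : ℂ) + 1) ≠ 0 := by
          rw [show ((m : ℂ) + 1) = ((m + 1 : ℕ) : ℂ) by push_cast; ring]
          exact Nat.cast_ne_zero.2 (Nat.succ_ne_zero m)
        push_cast at h ⊢
        rw [show -(1 / ((m : ℂ) + 1)) = (-1) / ((m : ℂ) + 1) by ring, eq_div_iff hne]
        linear_combination h
  constructor
  · intro w
    obtain ⟨u, hu, hb⟩ := key_bound ℏ hℏ0 hfac g g' hg hg' {w} isCompact_singleton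
    exact Summable.of_nonneg_of_le (fun n => norm_nonneg _)
      (fun n => hb n w (Set.mem_singleton w)) hu
  · intro K hK
    obtain ⟨u, hu, hb⟩ := key_bound ℏ hℏ0 hfac g g' hg hg' K hK
    exact tendstoUniformlyOn_tsum_nat hu fun n x hx => hb n x hx
end

section
/- Holomorphic dependence on the deformation parameter (Remark after Theorem 1.11): Define c₀(ℏ) = 1 and cₙ(ℏ) = ℏⁿ / ∏_{j=0}^{n−1}(1 + j·ℏ) for n ≥ 1, and let 𝒟 := ℂ \ ({0} ∪ {−1/k : k ∈ ℕ, k ≥ 1}). Then for all entire functions g, g̃ : ℂ → ℂ and every fixed w ∈ ℂ, the series ∑_{n=0}^∞ (cₙ(ℏ)/n!)·(w² − 1)ⁿ·g⁽ⁿ⁾(w)·g̃⁽ⁿ⁾(w) converges for every ℏ ∈ 𝒟, and the function ℏ ↦ ∑_{n=0}^∞ (cₙ(ℏ)/n!)·(w² − 1)ⁿ·g⁽ⁿ⁾(w)·g̃⁽ⁿ⁾(w) is holomorphic (complex differentiable) on the open set 𝒟. -/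
/-!
Since `c_n(ℏ) = ∏_{j<n} ℏ / (1 + jℏ)`, everything rests on a local lower bound
`|1 + jℏ| ≥ m (j + 1)`, valid uniformly for `ℏ` near any point of `𝒟` (the ratio
`|1 + jℏ| / (j + 1)` tends to `|ℏ| ≠ 0` and no factor vanishes on `𝒟`). It gives
`|c_n(ℏ)| ≤ (B/m)ⁿ / n!`, and with the Cauchy bound `|g̃⁽ⁿ⁾(w)| ≤ M n!` the terms are dominated
near each point by `M |g⁽ⁿ⁾(w)| ρⁿ / n!`, summable because the Taylor series of the entire
function `g` converges everywhere. Weierstrass' theorem on uniform limits of holomorphic functions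
concludes.
-/

open scoped BigOperators

/-- The deformation domain `𝒟 = ℂ \ {0, -1, -1/2, -1/3, ...}`. -/
def deformationDomain : Set ℂ :=
  {ℏ : ℂ | ℏ ≠ 0 ∧ ∀ k : ℕ, 1 ≤ k → ℏ ≠ -(1 / (k : ℂ))}

open Filter Topology Metric Finset Nat

lemma exists_pos_forall_le_of_tendsto {f : ℕ → ℝ} {L : ℝ} (hpos : ∀ n, 0 < f n)
    (hf : Tendsto f atTop (𝓝 L)) (hL : 0 < L) : ∃ m > 0, ∀ n, m ≤ f n := by
  obtain ⟨N, hN⟩ := eventually_atTop.1 (hf.eventually_const_lt (half_lt_self hL))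
  obtain ⟨k, -, hk⟩ := (range (N + 1)).exists_min_image f nonempty_range_add_one
  refine ⟨min (L / 2) (f k), lt_min (half_pos hL) (hpos k), fun n => ?_⟩
  rcases le_or_gt N n with hn | hn
  · exact (min_le_left _ _).trans (hN n hn).le
  · exact (min_le_right _ _).trans (hk n (mem_range.2 (by omega)))

-- Valid for every `ℏ`: if some `1 + jℏ` vanishes, both sides are `0`.
lemma starCoeff_eq_prod (ℏ : ℂ) (n : ℕ) :
    starCoeff ℏ n = ∏ j ∈ range n, ℏ / (1 + (j : ℂ) * ℏ) := by
  rw [prod_div_distrib, prod_const, card_range, starCoeff]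
  split_ifs with hn <;> simp [hn]

lemma one_add_natCast_mul_ne_zero {ℏ : ℂ} (hℏ : ℏ ∈ deformationDomain) (j : ℕ) :
    1 + (j : ℂ) * ℏ ≠ 0 := by
  obtain ⟨-, hk⟩ := hℏ
  rcases Nat.eq_zero_or_pos j with rfl | hj
  · simp
  · intro h
    apply hk j hj
    have hj' : (j : ℂ) ≠ 0 := Nat.cast_ne_zero.2 hj.ne'
    field_simp
    linear_combination h

lemma tendsto_norm_one_add_natCast_mul_div (ℏ : ℂ) :
    Tendsto (fun j : ℕ => ‖1 + (j : ℂ) * ℏ‖ / (j + 1)) atTop (𝓝 ‖ℏ‖) := by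
  have h : Tendsto (fun j : ℕ => ℏ + (1 - ℏ) * (1 / ((j : ℂ) + 1))) atTop (𝓝 ℏ) := by
    simpa using (tendsto_one_div_add_atTop_nhds_zero_nat.const_mul (1 - ℏ)).const_add ℏ
  refine (continuous_norm.tendsto ℏ).comp h |>.congr fun j => ?_
  have hj : ((j + 1 : ℕ) : ℂ) ≠ 0 := Nat.cast_ne_zero.2 j.succ_ne_zero
  have e : ℏ + (1 - ℏ) * (1 / ((j : ℂ) + 1)) = (1 + j * ℏ) / ((j + 1 : ℕ) : ℂ) := by
    push_cast at hj ⊢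
    field_simp
    ring
  rw [Function.comp_apply, e, norm_div, Complex.norm_natCast]
  push_cast
  rfl

lemma exists_forall_mul_le_norm_one_add_natCast_mul {ℏ : ℂ} (hℏ : ℏ ∈ deformationDomain) :
    ∃ m > 0, ∀ j : ℕ, m * (j + 1) ≤ ‖1 + (j : ℂ) * ℏ‖ := by
  obtain ⟨m, hm, hle⟩ := exists_pos_forall_le_of_tendsto
    (fun j => div_pos (norm_pos_iff.2 (one_add_natCast_mul_ne_zero hℏ j)) j.cast_add_one_pos)
    (tendsto_norm_one_add_natCast_mul_div ℏ) (norm_pos_iff.2 hℏ.1)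
  exact ⟨m, hm, fun j => (le_div_iff₀ j.cast_add_one_pos).1 (hle j)⟩

lemma mul_le_norm_one_add_natCast_mul_of_mem_ball {ℏ₀ ℏ : ℂ} {m : ℝ}
    (h₀ : ∀ j : ℕ, m * (j + 1) ≤ ‖1 + (j : ℂ) * ℏ₀‖) (hℏ : ℏ ∈ ball ℏ₀ (m / 2)) (j : ℕ) :
    m / 2 * (j + 1) ≤ ‖1 + (j : ℂ) * ℏ‖ := by
  have hdist : ‖(j : ℂ) * (ℏ - ℏ₀)‖ ≤ j * (m / 2) := by
    rw [norm_mul, Complex.norm_natCast]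
    exact mul_le_mul_of_nonneg_left (mem_ball_iff_norm.1 hℏ).le j.cast_nonneg
  have htri := norm_sub_norm_le (1 + (j : ℂ) * ℏ₀) (-((j : ℂ) * (ℏ - ℏ₀)))
  rw [norm_neg, sub_neg_eq_add, show 1 + (j : ℂ) * ℏ₀ + j * (ℏ - ℏ₀) = 1 + j * ℏ by ring] at htri
  linarith [h₀ j, pos_of_mem_ball hℏ]

lemma norm_starCoeff_le {ℏ : ℂ} {m : ℝ} (hm : 0 < m)
    (h : ∀ j : ℕ, m * (j + 1) ≤ ‖1 + (j : ℂ) * ℏ‖) (n : ℕ) :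
    ‖starCoeff ℏ n‖ ≤ (‖ℏ‖ / m) ^ n / n ! := by
  have hfac : ∏ j ∈ range n, ((j : ℝ) + 1) = n ! := by
    exact_mod_cast prod_range_add_one_eq_factorial n
  calc ‖starCoeff ℏ n‖ = ∏ j ∈ range n, ‖ℏ‖ / ‖1 + (j : ℂ) * ℏ‖ := by
        simp [starCoeff_eq_prod, norm_prod]
    _ ≤ ∏ j ∈ range n, (‖ℏ‖ / m) / ((j : ℝ) + 1) := by
        refine prod_le_prod (fun j _ => by positivity) fun j _ => ?_
        rw [div_div]
        exact div_le_div_of_nonneg_left (norm_nonneg _) (by positivity) (h j)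
    _ = (‖ℏ‖ / m) ^ n / n ! := by rw [prod_div_distrib, prod_const, card_range, hfac]

lemma differentiableOn_starCoeff {U : Set ℂ} (hU : ∀ ℏ ∈ U, ∀ j : ℕ, 1 + (j : ℂ) * ℏ ≠ 0)
    (n : ℕ) : DifferentiableOn ℂ (fun ℏ => starCoeff ℏ n) U := by
  simp_rw [starCoeff_eq_prod]
  exact DifferentiableOn.fun_finsetProd fun j _ =>
    differentiableOn_id.div (by fun_prop) fun ℏ hℏ => hU ℏ hℏ j

lemma summable_norm_iteratedDeriv_mul_pow_div_factorial {g : ℂ → ℂ} (hg : Differentiable ℂ g)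
    (w : ℂ) {r : ℝ} (hr : 0 ≤ r) :
    Summable fun n => ‖iteratedDeriv n g w‖ * r ^ n / n ! := by
  refine (Complex.hasSum_taylorSeries_of_entire hg w (w + r)).summable.norm.congr fun n => ?_
  simp [abs_of_nonneg hr]
  ring

lemma exists_norm_iteratedDeriv_le_mul_factorial {g : ℂ → ℂ} (hg : Differentiable ℂ g) (w : ℂ) :
    ∃ M, ∀ n, ‖iteratedDeriv n g w‖ ≤ M * n ! := by
  have hs := summable_norm_iteratedDeriv_mul_pow_div_factorial hg w zero_le_one
  refine ⟨∑' n, ‖iteratedDeriv n g w‖ * 1 ^ n / n !, fun n => ?_⟩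
  rw [← div_le_iff₀ (by positivity)]
  simpa using hs.le_tsum n fun k _ => by positivity

noncomputable def starTerm (g g' : ℂ → ℂ) (w ℏ : ℂ) (n : ℕ) : ℂ :=
  starCoeff ℏ n / (n ! : ℂ) * (w ^ 2 - 1) ^ n * iteratedDeriv n g w * iteratedDeriv n g' w

section starTerm

variable {g g' : ℂ → ℂ} {w : ℂ}

lemma differentiableOn_starTerm {U : Set ℂ} (hU : ∀ ℏ ∈ U, ∀ j : ℕ, 1 + (j : ℂ) * ℏ ≠ 0)
    (n : ℕ) : DifferentiableOn ℂ (fun ℏ => starTerm g g' w ℏ n) U :=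
  (((differentiableOn_starCoeff hU n).div_const _).mul_const _ |>.mul_const _).mul_const _

lemma norm_starTerm_le {ℏ : ℂ} {m B M : ℝ} (hm : 0 < m)
    (h : ∀ j : ℕ, m * (j + 1) ≤ ‖1 + (j : ℂ) * ℏ‖) (hB : ‖ℏ‖ ≤ B)
    (hM : ∀ n, ‖iteratedDeriv n g' w‖ ≤ M * n !) (n : ℕ) :
    ‖starTerm g g' w ℏ n‖ ≤ M * (‖iteratedDeriv n g w‖ * (‖w ^ 2 - 1‖ * B / m) ^ n / n !) := by
  calc ‖starTerm g g' w ℏ n‖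
      = ‖starCoeff ℏ n‖ / n ! * ‖w ^ 2 - 1‖ ^ n * ‖iteratedDeriv n g w‖ *
          ‖iteratedDeriv n g' w‖ := by
        simp [starTerm]
    _ ≤ (B / m) ^ n / n ! / n ! * ‖w ^ 2 - 1‖ ^ n * ‖iteratedDeriv n g w‖ * (M * n !) := by
        have hB₀ : 0 ≤ B := (norm_nonneg ℏ).trans hB
        gcongr
        · exact (norm_starCoeff_le hm h n).trans (by gcongr)
        · exact hM n
    _ = M * (‖iteratedDeriv n g w‖ * (‖w ^ 2 - 1‖ * B / m) ^ n / n !) := by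
        field_simp
        ring

lemma exists_summable_bound_starTerm (hg : Differentiable ℂ g) (hg' : Differentiable ℂ g')
    {U : Set ℂ} {m B : ℝ} (hm : 0 < m) (hU : ∀ ℏ ∈ U, ∀ j : ℕ, m * (j + 1) ≤ ‖1 + (j : ℂ) * ℏ‖)
    (hB : ∀ ℏ ∈ U, ‖ℏ‖ ≤ B) (hB₀ : 0 ≤ B) :
    ∃ u : ℕ → ℝ, Summable u ∧ ∀ n, ∀ ℏ ∈ U, ‖starTerm g g' w ℏ n‖ ≤ u n := by
  obtain ⟨M, hM⟩ := exists_norm_iteratedDeriv_le_mul_factorial hg' w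
  exact ⟨_, (summable_norm_iteratedDeriv_mul_pow_div_factorial hg w (by positivity)).mul_left M,
    fun n ℏ hℏ => norm_starTerm_le hm (hU ℏ hℏ) (hB ℏ hℏ) hM n⟩

lemma exists_ball_summable_bound_starTerm (hg : Differentiable ℂ g) (hg' : Differentiable ℂ g')
    {ℏ₀ : ℂ} (h₀ : ℏ₀ ∈ deformationDomain) :
    ∃ r > 0, ∃ u : ℕ → ℝ, Summable u ∧
      (∀ n, DifferentiableOn ℂ (fun ℏ => starTerm g g' w ℏ n) (ball ℏ₀ r)) ∧
      ∀ n, ∀ ℏ ∈ ball ℏ₀ r, ‖starTerm g g' w ℏ n‖ ≤ u n := by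
  obtain ⟨m, hm, h⟩ := exists_forall_mul_le_norm_one_add_natCast_mul h₀
  have hball : ∀ ℏ ∈ ball ℏ₀ (m / 2), ∀ j : ℕ, m / 2 * (j + 1) ≤ ‖1 + (j : ℂ) * ℏ‖ :=
    fun ℏ hℏ => mul_le_norm_one_add_natCast_mul_of_mem_ball h hℏ
  obtain ⟨u, hu, hle⟩ := exists_summable_bound_starTerm (w := w) hg hg' (half_pos hm) hball
    (fun ℏ hℏ => (norm_lt_of_mem_ball hℏ).le) (by positivity)
  refine ⟨m / 2, half_pos hm, u, hu, differentiableOn_starTerm fun ℏ hℏ j => ?_, hle⟩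
  exact norm_pos_iff.1 (lt_of_lt_of_le (by positivity) (hball ℏ hℏ j))

end starTerm

/-- Holomorphic dependence on the deformation parameter: for entire `g, g̃`
and fixed `w ∈ ℂ`, the series `∑ (c_n(ℏ)/n!) (w²-1)ⁿ g⁽ⁿ⁾(w) g̃⁽ⁿ⁾(w)` converges
for every `ℏ ∈ 𝒟` and defines a holomorphic function of `ℏ` on `𝒟`. -/
theorem star_series_holomorphic_in_hbar
    (g g' : ℂ → ℂ) (hg : Differentiable ℂ g) (hg' : Differentiable ℂ g') (w : ℂ) :
    (∀ ℏ ∈ deformationDomain, Summable (fun n : ℕ =>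
      (starCoeff ℏ n / (n.factorial : ℂ)) * (w ^ 2 - 1) ^ n *
        iteratedDeriv n g w * iteratedDeriv n g' w)) ∧
    DifferentiableOn ℂ
      (fun ℏ : ℂ => ∑' n : ℕ,
        (starCoeff ℏ n / (n.factorial : ℂ)) * (w ^ 2 - 1) ^ n *
          iteratedDeriv n g w * iteratedDeriv n g' w)
      deformationDomain := by
  constructor
  · intro ℏ hℏ
    obtain ⟨r, hr, u, hu, -, hle⟩ := exists_ball_summable_bound_starTerm (w := w) hg hg' hℏ
    exact hu.of_norm_bounded fun n => hle n ℏ (mem_ball_self hr)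
  · refine differentiableOn_of_locally_differentiableOn fun ℏ₀ h₀ => ?_
    obtain ⟨r, hr, u, hu, hdiff, hle⟩ := exists_ball_summable_bound_starTerm (w := w) hg hg' h₀
    have hsum := Complex.differentiableOn_tsum_of_summable_norm hu hdiff isOpen_ball hle
    exact ⟨ball ℏ₀ r, isOpen_ball, mem_ball_self hr, hsum.mono Set.inter_subset_right⟩
end

section
/- Automorphisms of the complement of the diagonal (Remark 3.5): Let α ∈ ℂ with α ≠ 0 and let g : ℂ → ℂ be an entire function. Define Φ(z,w) = (α·z + g(1/(z − w)), α·w + g(1/(z − w))) for z ≠ w. Then Φ maps the open set V = {(z,w) ∈ ℂ × ℂ : z ≠ w} bijectively onto itself, Φ is holomorphic on V, and its inverse is the map (z',w') ↦ ((z' − g(α/(z' − w')))/α, (w' − g(α/(z' − w')))/α), which is also holomorphic on V. -/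
/-!
Write `Φ(z, w) = α • (z, w) + g (1 / (z - w)) • (1, 1)`. Then `Φ(z, w)₁ - Φ(z, w)₂ = α (z - w)`, so
the shift `g (1 / (z - w))` can be recomputed from the image as `g (α / (z' - w'))` and subtracted
off; this gives the inverse.
-/

open Function Set

section Algebra

variable {K : Type*} [Field K]

def diagShift (α : K) (g : K → K) (p : K × K) : K × K :=
  (α * p.1 + g (1 / (p.1 - p.2)), α * p.2 + g (1 / (p.1 - p.2)))

def diagShiftInv (α : K) (g : K → K) (q : K × K) : K × K :=
  ((q.1 - g (α / (q.1 - q.2))) / α, (q.2 - g (α / (q.1 - q.2))) / α)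

variable {α : K} (g : K → K)

theorem diagShift_fst_sub_snd (p : K × K) :
    (diagShift α g p).1 - (diagShift α g p).2 = α * (p.1 - p.2) := by
  simp only [diagShift]; ring

theorem diagShiftInv_fst_sub_snd (q : K × K) :
    (diagShiftInv α g q).1 - (diagShiftInv α g q).2 = (q.1 - q.2) / α := by
  simp only [diagShiftInv]; ring

/- Both inverse identities hold on all of `K × K`: on the diagonal the junk value `1 / 0 = 0`
is matched by `α / 0 = 0`. -/
theorem diagShiftInv_diagShift (hα : α ≠ 0) :
    LeftInverse (diagShiftInv α g) (diagShift α g) := by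
  intro p
  have hshift : α / ((diagShift α g p).1 - (diagShift α g p).2) = 1 / (p.1 - p.2) := by
    rw [diagShift_fst_sub_snd, div_mul_cancel_left₀ hα, one_div]
  simp only [diagShiftInv, hshift]
  simp only [diagShift]
  ext <;> field_simp <;> ring

theorem diagShift_diagShiftInv (hα : α ≠ 0) :
    RightInverse (diagShiftInv α g) (diagShift α g) := by
  intro q
  have hshift : 1 / ((diagShiftInv α g q).1 - (diagShiftInv α g q).2) = α / (q.1 - q.2) := by
    rw [diagShiftInv_fst_sub_snd, one_div_div]
  simp only [diagShift, hshift]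
  simp only [diagShiftInv]
  ext <;> field_simp <;> ring

theorem mapsTo_diagShift (hα : α ≠ 0) :
    MapsTo (diagShift α g) (diagonal K)ᶜ (diagonal K)ᶜ := by
  intro p hp
  refine sub_ne_zero.mp ?_
  rw [diagShift_fst_sub_snd]
  exact mul_ne_zero hα (sub_ne_zero.mpr hp)

theorem mapsTo_diagShiftInv (hα : α ≠ 0) :
    MapsTo (diagShiftInv α g) (diagonal K)ᶜ (diagonal K)ᶜ := by
  intro q hq
  refine sub_ne_zero.mp ?_
  rw [diagShiftInv_fst_sub_snd]
  exact div_ne_zero (sub_ne_zero.mpr hq) hα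

theorem bijOn_diagShift (hα : α ≠ 0) :
    BijOn (diagShift α g) (diagonal K)ᶜ (diagonal K)ᶜ :=
  InvOn.bijOn ⟨(diagShiftInv_diagShift g hα).leftInvOn _,
      (diagShift_diagShiftInv g hα).rightInvOn _⟩
    (mapsTo_diagShift g hα) (mapsTo_diagShiftInv g hα)

end Algebra

section Holomorphy

variable {𝕜 : Type*} [NontriviallyNormedField 𝕜] {g : 𝕜 → 𝕜}

theorem differentiableOn_comp_div_fst_sub_snd (hg : Differentiable 𝕜 g) (c : 𝕜) :
    DifferentiableOn 𝕜 (fun p : 𝕜 × 𝕜 => g (c / (p.1 - p.2))) (diagonal 𝕜)ᶜ := by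
  have hsub : DifferentiableOn 𝕜 (fun p : 𝕜 × 𝕜 => p.1 - p.2) (diagonal 𝕜)ᶜ :=
    (differentiable_fst.sub differentiable_snd).differentiableOn
  simp_rw [div_eq_mul_inv]
  exact hg.comp_differentiableOn <|
    (differentiableOn_const c).mul (hsub.fun_inv fun _ hp => sub_ne_zero.mpr hp)

theorem differentiableOn_diagShift (hg : Differentiable 𝕜 g) (α : 𝕜) :
    DifferentiableOn 𝕜 (diagShift α g) (diagonal 𝕜)ᶜ := by
  have hshift := differentiableOn_comp_div_fst_sub_snd hg 1
  exact ((differentiable_fst.const_mul α).differentiableOn.add hshift).prodMk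
    ((differentiable_snd.const_mul α).differentiableOn.add hshift)

theorem differentiableOn_diagShiftInv (hg : Differentiable 𝕜 g) (α : 𝕜) :
    DifferentiableOn 𝕜 (diagShiftInv α g) (diagonal 𝕜)ᶜ := by
  have hshift := differentiableOn_comp_div_fst_sub_snd hg α
  unfold diagShiftInv
  simp only [div_eq_mul_inv] at hshift ⊢
  exact ((differentiable_fst.differentiableOn.fun_sub hshift).mul_const α⁻¹).prodMk
    ((differentiable_snd.differentiableOn.fun_sub hshift).mul_const α⁻¹)

end Holomorphy

/-- Remark 3.5: for `α ≠ 0` and entire `g`, the map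
`Φ(z,w) = (αz + g(1/(z-w)), αw + g(1/(z-w)))` is a holomorphic bijection of
`V = {(z,w) : z ≠ w}` onto itself, with holomorphic inverse
`(z',w') ↦ ((z' - g(α/(z'-w')))/α, (w' - g(α/(z'-w')))/α)`. -/
theorem phi_automorphism_of_offDiagonal
    (α : ℂ) (hα : α ≠ 0) (g : ℂ → ℂ) (hg : Differentiable ℂ g) :
    Set.BijOn
      (fun p : ℂ × ℂ =>
        (α * p.1 + g (1 / (p.1 - p.2)), α * p.2 + g (1 / (p.1 - p.2))))
      {p : ℂ × ℂ | p.1 ≠ p.2} {p : ℂ × ℂ | p.1 ≠ p.2} ∧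
    DifferentiableOn ℂ
      (fun p : ℂ × ℂ =>
        (α * p.1 + g (1 / (p.1 - p.2)), α * p.2 + g (1 / (p.1 - p.2))))
      {p : ℂ × ℂ | p.1 ≠ p.2} ∧
    (∀ p ∈ {p : ℂ × ℂ | p.1 ≠ p.2},
      (fun q : ℂ × ℂ =>
        ((q.1 - g (α / (q.1 - q.2))) / α, (q.2 - g (α / (q.1 - q.2))) / α))
        ((fun p : ℂ × ℂ =>
          (α * p.1 + g (1 / (p.1 - p.2)), α * p.2 + g (1 / (p.1 - p.2)))) p) = p) ∧
    (∀ q ∈ {p : ℂ × ℂ | p.1 ≠ p.2},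
      (fun p : ℂ × ℂ =>
        (α * p.1 + g (1 / (p.1 - p.2)), α * p.2 + g (1 / (p.1 - p.2))))
        ((fun q : ℂ × ℂ =>
          ((q.1 - g (α / (q.1 - q.2))) / α, (q.2 - g (α / (q.1 - q.2))) / α)) q) = q) ∧
    DifferentiableOn ℂ
      (fun q : ℂ × ℂ =>
        ((q.1 - g (α / (q.1 - q.2))) / α, (q.2 - g (α / (q.1 - q.2))) / α))
      {p : ℂ × ℂ | p.1 ≠ p.2} :=
  ⟨bijOn_diagShift g hα, differentiableOn_diagShift hg α,
    fun p _ => diagShiftInv_diagShift g hα p, fun q _ => diagShift_diagShiftInv g hα q,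
    differentiableOn_diagShiftInv hg α⟩
end
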